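/- arXiv:0910.1959 — 3 statements merged into one kernel-verified Lean document; each statement's English description precedes it below -/
import Mathlib

section
/- Let R be a reduced elliptic root system of rank l ≥ 2 with fundamental-set Π ∪ {a} and associated maps k and g. Let α, β ∈ Π with (β^∨,α) = −1. Then g(β) = ∅, k(α) divides k(β), and the triple ((α^∨,β), k(β)/k(α), g(α)) is one of: (−1, 1, ∅), (−2, 1, ∅), (−3, 1, ∅), (−2, 2, ∅), (−3, 3, ∅), (−2, 1, 2ℤ+1). -/
/- ## Preliminaries: extended affine root systems (Saito) -/

noncomputable section

open Set

/-- The reflection `s_v : z ↦ z - (v^∨, z) v = z - (2 (v,z)/(v,v)) v` associated to a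
bilinear form `B` and a vector `v`.  (When `B v v = 0` this is the identity, by the
`division by zero = 0` convention; reflections are only ever used at non-isotropic `v`.) -/
def srefl {V : Type*} [AddCommGroup V] [Module ℝ V]
    (B : LinearMap.BilinForm ℝ V) (v : V) : Module.End ℝ V :=
  LinearMap.id - (((2 * (B v v)⁻¹) • (B v)).smulRight v)

/-- The Weyl group `W_S` generated by the reflections in the elements of `S`
(realized as the multiplicative closure; each generator is an involution, so this
agrees with the generated group). -/
def weyl {V : Type*} [AddCommGroup V] [Module ℝ V]
    (B : LinearMap.BilinForm ℝ V) (S : Set V) : Submonoid (Module.End ℝ V) :=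
  Submonoid.closure (srefl B '' S)

/-- The orbit `W_S · α`. -/
def worbit {V : Type*} [AddCommGroup V] [Module ℝ V]
    (B : LinearMap.BilinForm ℝ V) (S : Set V) (α : V) : Set V :=
  {v | ∃ w ∈ weyl B S, w α = v}

/-- `V⁰`, the set of isotropic vectors. -/
def nullSet {V : Type*} [AddCommGroup V] [Module ℝ V]
    (B : LinearMap.BilinForm ℝ V) : Set V := {v | B v v = 0}

/-- `ℤR`, the subgroup of `V` generated by `R`. -/
def zspan {V : Type*} [AddCommGroup V] (R : Set V) : AddSubgroup V :=
  AddSubgroup.closure R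

/-- `ℤ≥0 Π`, the set of nonnegative-integer linear combinations of elements of `Π`. -/
def nnspan {V : Type*} [AddCommMonoid V] (P : Set V) : Set V :=
  (AddSubmonoid.closure P : Set V)

/-- `(R, V)` is an `n`-extended affine root system of rank `l` (K. Saito). -/
structure IsEARS {V : Type*} [AddCommGroup V] [Module ℝ V]
    (B : LinearMap.BilinForm ℝ V) (R : Set V) (l n : ℕ) : Prop where
  rank_pos : 1 ≤ l
  findim : FiniteDimensional ℝ V
  symm : ∀ u v, B u v = B v u
  posSemidef : ∀ v, 0 ≤ B v v
  dim_eq : Module.finrank ℝ V = l + n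
  null_eq : nullSet B = (LinearMap.ker B : Set V)
  dim_null : Module.finrank ℝ (LinearMap.ker B) = n
  /-- (AX1), first half -/
  root_nonisotropic : ∀ α ∈ R, B α α ≠ 0
  /-- (AX1), second half -/
  span_eq_top : Submodule.span ℝ R = ⊤
  /-- (AX2) -/
  free : Module.Free ℤ (zspan R)
  /-- (AX2) -/
  rank_eq : Module.finrank ℤ (zspan R) = l + n
  /-- (AX3): `(α^∨, β) ∈ ℤ` -/
  integral : ∀ α ∈ R, ∀ β ∈ R, ∃ m : ℤ, 2 * B α β = (m : ℝ) * B α α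
  /-- (AX4) -/
  reflect : ∀ α ∈ R, srefl B α '' R = R
  /-- (AX5) -/
  connected : ∀ S' ⊆ R, S'.Nonempty → S' ≠ R → ∃ x ∈ S', ∃ y ∈ R \ S', B x y ≠ 0

/-- `R` is reduced, i.e. `R ∩ 2R = ∅`. -/
def IsReducedRS {V : Type*} [AddCommGroup V] [Module ℝ V] (R : Set V) : Prop :=
  ∀ α ∈ R, (2 : ℤ) • α ∉ R

/-- `Π₀` is a base (with `m` elements) of the root system `R₀`:
`Π₀ ⊆ R₀`, `Π₀` consists of `m` linearly independent elements, and
`R₀ = (R₀ ∩ ℤ≥0 Π₀) ∪ (R₀ ∩ ℤ≤0 Π₀)`. -/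
def IsBaseSet {M : Type*} [AddCommGroup M] [Module ℝ M] (R₀ P₀ : Set M) (m : ℕ) : Prop :=
  P₀ ⊆ R₀ ∧ P₀.Finite ∧ P₀.ncard = m ∧
  LinearIndependent ℝ ((↑) : P₀ → M) ∧
  R₀ = (R₀ ∩ nnspan P₀) ∪ (R₀ ∩ (-(nnspan P₀)))

/-- The bilinear form induced on a quotient `V ⧸ W` by a form vanishing on `W`. -/
def quotForm {V : Type*} [AddCommGroup V] [Module ℝ V]
    (W : Submodule ℝ V) (B : LinearMap.BilinForm ℝ V)
    (h1 : ∀ w ∈ W, B w = 0) (h2 : ∀ v : V, ∀ w ∈ W, B v w = 0) :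
    LinearMap.BilinForm ℝ (V ⧸ W) :=
  Submodule.liftQ W
    { toFun := fun v => Submodule.liftQ W (B v) (fun w hw => LinearMap.mem_ker.mpr (h2 v w hw))
      map_add' := fun u v => by
        ext x
        simp
      map_smul' := fun c v => by
        ext x
        simp }
    (fun w hw => by
      simp only [LinearMap.mem_ker]
      ext x
      simp [h1 w hw])

end

/-- A fundamental-set `Π ∪ {a}` of a reduced elliptic root system `R` of rank `l`:
(FS1) `a ∈ (ℤR)⁰` and `(ℤR)⁰ = ℤa ⊕ ℤb` for some `b`;
(FS2) `|Π| = l+1`, `Π ⊆ R` and `π_a(Π)` is a base of the affine root system `π_a(R)`. -/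
def IsFundamentalSet {V : Type*} [AddCommGroup V] [Module ℝ V]
    (B : LinearMap.BilinForm ℝ V) (R : Set V) (l : ℕ) (P : Set V) (a : V) : Prop :=
  a ∈ zspan R ∧ B a a = 0 ∧
  (∃ b : V, b ∈ zspan R ∧ B b b = 0 ∧
    ((zspan R : Set V) ∩ nullSet B = {v | ∃ m n : ℤ, v = m • a + n • b}) ∧
    (∀ m n : ℤ, m • a + n • b = 0 → m = 0 ∧ n = 0)) ∧
  P ⊆ R ∧ P.Finite ∧ P.ncard = l + 1 ∧
  IsBaseSet ((Submodule.span ℝ {a}).mkQ '' R) ((Submodule.span ℝ {a}).mkQ '' P) (l + 1)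

/-- The subset `⋃_{ε=±1} ((εα + ℤ kα a) ∪ (2εα + gα·kα a))` of the plane `ℝα ⊕ ℝa`;
here `gα : Bool`, with `false` encoding `g(α) = ∅` and `true` encoding `g(α) = 2ℤ+1`. -/
def kgLine {V : Type*} [AddCommGroup V] (a α : V) (kα : ℕ) (gα : Bool) : Set V :=
  {v | ∃ ε m : ℤ, (ε = 1 ∨ ε = -1) ∧ v = ε • α + (m * kα) • a} ∪
  {v | gα = true ∧ ∃ ε m : ℤ, (ε = 1 ∨ ε = -1) ∧ Odd m ∧ v = (2 * ε) • α + (m * kα) • a}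

/-- `k : Π → ℕ` and `g : Π → {∅, 2ℤ+1}` are the maps associated to the fundamental-set
`Π ∪ {a}`, i.e. `R ∩ (ℝα ⊕ ℝa) = ⋃_{ε=±1} ((εα + ℤ k(α) a) ∪ (2εα + g(α)k(α)a))`. -/
def IsKG {V : Type*} [AddCommGroup V] [Module ℝ V]
    (R : Set V) (a : V) (P : Set V) (k : V → ℕ) (g : V → Bool) : Prop :=
  ∀ α ∈ P, 0 < k α ∧
    R ∩ (Submodule.span ℝ {α, a} : Set V) = kgLine a α (k α) (g α)

/-- `c(α) = 1` if `g(α) = ∅`, `c(α) = 2` if `g(α) = 2ℤ+1`. -/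
def cMap {V : Type*} (g : V → Bool) (α : V) : ℕ := if g α then 2 else 1

/-- `α* := c(α)·α + k(α)·a`. -/
def starMap {V : Type*} [AddCommGroup V] (a : V) (k : V → ℕ) (g : V → Bool) (α : V) : V :=
  (cMap g α : ℤ) • α + (k α : ℤ) • a

/-- `B₊ := {α, α* | α ∈ Π}`. -/
def bplus {V : Type*} [AddCommGroup V] (a : V) (P : Set V) (k : V → ℕ) (g : V → Bool) :
    Set V :=
  P ∪ (starMap a k g '' P)

/-- `B := B₊ ∪ (−B₊)`. -/
def bfull {V : Type*} [AddCommGroup V] (a : V) (P : Set V) (k : V → ℕ) (g : V → Bool) :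
    Set V :=
  bplus a P k g ∪ (-(bplus a P k g))

/-- The set `R(Π,k,g) = ⋃_{w ∈ W_Π} ⋃_{α ∈ Π} ((w(α) + ℤk(α)a) ∪ (w(2α) + g(α)k(α)a))`. -/
def kgUnion {V : Type*} [AddCommGroup V] [Module ℝ V]
    (B : LinearMap.BilinForm ℝ V) (P : Set V) (a : V) (k : V → ℕ) (g : V → Bool) :
    Set V :=
  {v | ∃ w ∈ weyl B P, ∃ α ∈ P,
    (∃ m : ℤ, v = w α + (m * k α) • a) ∨
    (g α = true ∧ ∃ m : ℤ, Odd m ∧ v = w ((2 : ℤ) • α) + (m * k α) • a)}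

/-!
Write `(α^∨, β) = -q`. Since `(2α + β, 2α + β) = (4 - q)(α, α) ≥ 0`, we have `q ≤ 4`. If `q = 4`,
then `2α + β` is in the radical, and `s_β s_α`, `s_α s_β` translate every root `x` by
`∓ (α^∨, x)/2 · (2α + β)`. Iterating pushes the `β`-coordinate of a root `x` with `(α, x) ≠ 0`
to both signs without changing its other coordinates, so sign-coherence of the base forces those
coordinates to vanish. Rank `≥ 2` supplies a third simple root, which is then orthogonal to `α`,
and (AX5) fails.

If `v` and `t v + s a` are roots, `s_{tv+sa} s_v` translates each root `x` by `((v^∨, x)/t) s a`.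
Applied to `β + k(β)a`, `α + k(α)a` and, when `g(α) ≠ ∅`, `2α + k(α)a`, this gives
`k(α) ∣ k(β)`, `k(β) ∣ q k(α)` and `k(β) ∣ k(α)`. Finally, `2γ + k(γ)a ∈ R` makes every
`(γ^∨, x)` even, which excludes `g(β) ≠ ∅` (since `(β^∨, α) = -1`) and gives `q = 2` when
`g(α) ≠ ∅`.
-/

section Reflections

variable {V : Type*} [AddCommGroup V] [Module ℝ V] (B : LinearMap.BilinForm ℝ V)

lemma srefl_apply (v x : V) : srefl B v x = x - (2 * B v x / B v v) • v := by
  simp only [srefl, LinearMap.sub_apply, LinearMap.id_apply, LinearMap.smulRight_apply,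
    LinearMap.smul_apply, smul_eq_mul]
  ring_nf

lemma srefl_srefl_eq_add_smul (hsymm : ∀ u v, B u v = B v u) {v w : V} {t : ℝ} (ht : t ≠ 0)
    (hv : B v v ≠ 0) (hd : B (w - t • v) = 0) (x : V) :
    srefl B w (srefl B v x) = x + (2 * B v x / (t * B v v)) • (w - t • v) := by
  have hw : ∀ y, B w y = t * B v y := fun y => by
    have := LinearMap.congr_fun hd y
    simp only [map_sub, map_smul, LinearMap.sub_apply, LinearMap.smul_apply, smul_eq_mul,
      LinearMap.zero_apply] at this
    linarith
  have hww : B w w = t ^ 2 * B v v := by rw [hw, hsymm, hw]; ring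
  have hwx : B w (x - (2 * B v x / B v v) • v) = -(t * B v x) := by
    rw [map_sub, map_smul, hw, hw, smul_eq_mul]; field_simp; ring
  rw [srefl_apply, srefl_apply, hwx, hww]
  match_scalars <;> field_simp

lemma linearIndependent_pair_of_apply_eq_zero {v a : V} (hv : B v v ≠ 0) (ha : B a = 0)
    (ha0 : a ≠ 0) : LinearIndependent ℝ ![v, a] := by
  refine LinearIndependent.pair_iff.mpr fun s t hst => ?_
  have hs : s = 0 := by
    have := LinearMap.congr_fun (congrArg B hst) v
    simp only [map_add, map_smul, LinearMap.add_apply, LinearMap.smul_apply, ha, smul_eq_mul,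
      LinearMap.zero_apply, map_zero] at this
    simpa [hv] using this
  subst hs
  exact ⟨rfl, by simpa [ha0] using hst⟩

lemma apply_eq_neg_two_mul_of_two_smul_add_eq_zero {α β : V} (hδ : B ((2 : ℝ) • α + β) = 0)
    (y : V) : B β y = -2 * B α y := by
  have := LinearMap.congr_fun hδ y
  simp only [map_add, map_smul, LinearMap.add_apply, LinearMap.smul_apply, smul_eq_mul,
    LinearMap.zero_apply] at this
  linarith

lemma mkQ_ne_of_two_smul_add_eq_zero {a α β : V} (ha : B a = 0) (hA : B α α ≠ 0)
    (hδ : B ((2 : ℝ) • α + β) = 0) :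
    (Submodule.span ℝ {a}).mkQ α ≠ (Submodule.span ℝ {a}).mkQ β := by
  intro h
  obtain ⟨s, hs⟩ := Submodule.mem_span_singleton.mp ((Submodule.Quotient.eq _).mp h)
  have := congrArg (fun v => B v α) hs
  simp only [map_smul, ha, map_sub, LinearMap.sub_apply,
    apply_eq_neg_two_mul_of_two_smul_add_eq_zero B hδ] at this
  exact hA (by simp at this; linarith)

lemma apply_two_smul_add_self (hsymm : ∀ u v, B u v = B v u) {α β : V} {q : ℝ}
    (hpair : 2 * B β α = -B β β) (hq : 2 * B α β = -q * B α α) :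
    B ((2 : ℝ) • α + β) ((2 : ℝ) • α + β) = (4 - q) * B α α := by
  simp only [map_add, map_smul, LinearMap.add_apply, LinearMap.smul_apply, smul_eq_mul]
  rw [hsymm β α] at hpair ⊢
  linarith

end Reflections

lemma eq_zero_of_forall_add_int_smul_mem {M : Type*} [AddCommGroup M] [Module ℝ M] {S : Set M}
    {φ ψ : M →ₗ[ℝ] ℝ} (hS : ∀ z ∈ S, (0 ≤ φ z ∧ 0 ≤ ψ z) ∨ (φ z ≤ 0 ∧ ψ z ≤ 0)) {z d : M}
    (hline : ∀ j : ℤ, z + (j : ℝ) • d ∈ S) (hφ : φ d ≠ 0) (hψ : ψ d = 0) : ψ z = 0 := by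
  obtain ⟨N, hN⟩ := exists_nat_gt (|φ z| / |φ d|)
  rw [div_lt_iff₀ (abs_pos.mpr hφ)] at hN
  have key : ∀ j : ℤ, (0 ≤ φ z + j * φ d ∧ 0 ≤ ψ z) ∨ (φ z + j * φ d ≤ 0 ∧ ψ z ≤ 0) :=
    fun j => by simpa [hψ] using hS _ (hline j)
  rcases key N with h₁ | h₁ <;> rcases key (-N) with h₂ | h₂ <;> push_cast at h₁ h₂ <;>
    cases abs_cases (φ d) <;> cases abs_cases (φ z) <;> nlinarith

lemma IsBaseSet.coord_nonneg_or_nonpos {M ι : Type*} [AddCommGroup M] [Module ℝ M]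
    {R₀ P₀ : Set M} {m : ℕ} (hbase : IsBaseSet R₀ P₀ m) (b : Module.Basis ι ℝ M)
    (hb : P₀ ⊆ Set.range b) {z : M} (hz : z ∈ R₀) :
    (∀ i, 0 ≤ b.coord i z) ∨ (∀ i, b.coord i z ≤ 0) := by
  have hnn : ∀ y ∈ nnspan P₀, ∀ i, 0 ≤ b.coord i y := by
    intro y hy i
    induction hy using AddSubmonoid.closure_induction with
    | mem y hy =>
      obtain ⟨j, rfl⟩ := hb hy
      rw [Module.Basis.coord_apply, Module.Basis.repr_self]
      exact Finsupp.single_nonneg.mpr zero_le_one i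
    | zero => simp
    | add y y' _ _ hy hy' => simpa using add_nonneg hy hy'
  rcases hbase.2.2.2.2.subset hz with ⟨-, h⟩ | ⟨-, h⟩
  · exact Or.inl (hnn z h)
  · exact Or.inr fun i => by simpa using hnn _ h i

namespace IsEARS

variable {V : Type*} [AddCommGroup V] [Module ℝ V] {B : LinearMap.BilinForm ℝ V} {R : Set V}
  {l n : ℕ}

lemma apply_eq_zero_of_isotropic (hE : IsEARS B R l n) {v : V} (hv : B v v = 0) : B v = 0 :=
  LinearMap.mem_ker.mp (show v ∈ (LinearMap.ker B : Set V) from hE.null_eq ▸ hv)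

lemma apply_self_pos (hE : IsEARS B R l n) {α : V} (hα : α ∈ R) : 0 < B α α :=
  (hE.posSemidef α).lt_of_ne' (hE.root_nonisotropic α hα)

lemma srefl_mem (hE : IsEARS B R l n) {v x : V} (hv : v ∈ R) (hx : x ∈ R) : srefl B v x ∈ R :=
  hE.reflect v hv ▸ Set.mem_image_of_mem _ hx

lemma add_smul_sub_smul_mem (hE : IsEARS B R l n) {v w x : V} {t : ℝ} (hv : v ∈ R) (hw : w ∈ R)
    (ht : t ≠ 0) (hd : B (w - t • v) = 0) (hx : x ∈ R) :
    x + (2 * B v x / (t * B v v)) • (w - t • v) ∈ R := by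
  rw [← srefl_srefl_eq_add_smul B hE.symm ht (hE.root_nonisotropic v hv) hd]
  exact hE.srefl_mem hw (hE.srefl_mem hv hx)

lemma add_smul_mem_of_smul_add_smul_mem (hE : IsEARS B R l n) {a v x : V} {t s : ℝ}
    (ha : B a = 0) (hv : v ∈ R) (ht : t ≠ 0) (hvs : t • v + s • a ∈ R) (hx : x ∈ R) :
    x + (2 * B v x / (t * B v v) * s) • a ∈ R := by
  have := hE.add_smul_sub_smul_mem hv hvs ht (by simp [ha]) hx
  rwa [add_sub_cancel_left, smul_smul] at this

lemma exists_apply_eq_intCast_mul_of_two_smul_add_smul_mem (hE : IsEARS B R l n) {a β x : V}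
    {s : ℝ} (ha : B a = 0) (h : (2 : ℝ) • β + s • a ∈ R) (hx : x ∈ R) :
    ∃ m : ℤ, B β x = m * B β β := by
  obtain ⟨m, hm⟩ := hE.integral _ h x hx
  have hβa : B β a = 0 := by rw [hE.symm, ha, LinearMap.zero_apply]
  simp only [map_add, map_smul, LinearMap.add_apply, LinearMap.smul_apply, smul_eq_mul, ha,
    hβa, LinearMap.zero_apply] at hm
  exact ⟨m, by linarith⟩

lemma exists_nat_pairing (hE : IsEARS B R l n) {α β : V} (hα : α ∈ R) (hβ : β ∈ R)
    (hpair : 2 * B β α = -B β β) : ∃ q : ℕ, 0 < q ∧ 2 * B α β = -(q : ℝ) * B α α := by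
  obtain ⟨p, hp⟩ := hE.integral α hα β hβ
  have hαβ : (p : ℝ) * B α α < 0 := by
    rw [← hp, hE.symm]; linarith [hE.apply_self_pos hβ]
  have hp0 : p < 0 := by exact_mod_cast neg_of_mul_neg_left hαβ (hE.apply_self_pos hα).le
  obtain ⟨q, rfl⟩ : ∃ q : ℕ, p = -q := ⟨p.natAbs, by omega⟩
  exact ⟨q, by omega, by rw [hp]; push_cast; ring⟩

lemma add_int_smul_mem_of_two_smul_add_eq_zero (hE : IsEARS B R l n) {α β x : V} (hα : α ∈ R)
    (hβ : β ∈ R) (hδ : B ((2 : ℝ) • α + β) = 0) (hx : x ∈ R) (j : ℤ) :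
    x + (j : ℝ) • ((B α x / B α α) • ((2 : ℝ) • α + β)) ∈ R := by
  set δ := (2 : ℝ) • α + β
  have hA := hE.root_nonisotropic α hα
  have hβfun := apply_eq_neg_two_mul_of_two_smul_add_eq_zero B hδ
  have hββ : B β β = 4 * B α α := by rw [hβfun, hE.symm, hβfun]; ring
  have hαδ : B α δ = 0 := by rw [hE.symm, hδ, LinearMap.zero_apply]
  have hdown : ∀ y ∈ R, y - (B α y / B α α) • δ ∈ R := fun y hy => by
    have hd : β - (-2 : ℝ) • α = δ := by module
    convert hE.add_smul_sub_smul_mem hα hβ (t := -2) (by norm_num) (hd ▸ hδ) hy using 1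
    rw [hd, show 2 * B α y / (-2 * B α α) = -(B α y / B α α) by field_simp]
    module
  have hup : ∀ y ∈ R, y + (B α y / B α α) • δ ∈ R := fun y hy => by
    have hd : α - (-1 / 2 : ℝ) • β = (1 / 2 : ℝ) • δ := by module
    convert hE.add_smul_sub_smul_mem hβ hα (t := -1 / 2) (by norm_num)
      (by rw [hd, map_smul, hδ, smul_zero]) hy using 1
    rw [hd, hβfun, hββ, show 2 * (-2 * B α y) / (-1 / 2 * (4 * B α α)) = 2 * (B α y / B α α) by
      field_simp; ring]
    module
  induction j using Int.induction_on with
  | zero => simpa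
  | succ i ih =>
    convert hup _ ih using 1
    simp only [map_add, map_smul, hαδ, smul_zero, add_zero]
    push_cast
    module
  | pred i ih =>
    convert hdown _ ih using 1
    simp only [map_add, map_smul, hαδ, smul_zero, add_zero]
    push_cast
    module

lemma coord_eq_zero_of_two_smul_add_eq_zero (hE : IsEARS B R l n) {M ι : Type*} [AddCommGroup M]
    [Module ℝ M] (π : V →ₗ[ℝ] M) (b : Module.Basis ι ℝ M)
    (hcoh : ∀ x ∈ R, (∀ i, 0 ≤ b.coord i (π x)) ∨ (∀ i, b.coord i (π x) ≤ 0))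
    {α β : V} (hα : α ∈ R) (hβ : β ∈ R) (hδ : B ((2 : ℝ) • α + β) = 0)
    {iα iβ i : ι} (hiα : b iα = π α) (hiβ : b iβ = π β) (hαβ : iα ≠ iβ) (hiα' : i ≠ iα)
    (hiβ' : i ≠ iβ) {x : V} (hx : x ∈ R) (hαx : B α x ≠ 0) : b.coord i (π x) = 0 := by
  classical
  have hA := hE.root_nonisotropic α hα
  refine eq_zero_of_forall_add_int_smul_mem (S := π '' R) (φ := b.coord iβ)
    (d := (B α x / B α α) • π ((2 : ℝ) • α + β)) ?_ (fun j => ⟨_,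
      hE.add_int_smul_mem_of_two_smul_add_eq_zero hα hβ hδ hx j, by simp⟩) ?_ ?_
  · rintro _ ⟨y, hy, rfl⟩
    rcases hcoh y hy with h | h
    exacts [Or.inl ⟨h _, h _⟩, Or.inr ⟨h _, h _⟩]
  · simp [← hiα, ← hiβ, hαβ, hαx, hA]
  · simp [← hiα, ← hiβ, hiα'.symm, hiβ'.symm]

lemma exists_mkQ_notMem_span_pair (hE : IsEARS B R l n) {a α β γ : V} (ha : B a = 0)
    (hα : α ∈ R) (hγ : γ ∈ R) (hαγ : B α γ = 0) (hδ : B ((2 : ℝ) • α + β) = 0) :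
    ∃ x ∈ R, B α x ≠ 0 ∧ (Submodule.span ℝ {a}).mkQ x ∉
      Submodule.span ℝ {(Submodule.span ℝ {a}).mkQ α, (Submodule.span ℝ {a}).mkQ β} := by
  set W := Submodule.span ℝ {a}
  obtain ⟨x, ⟨hxR, hαx⟩, y, ⟨hyR, hαy⟩, hxy⟩ := hE.connected {x ∈ R | B α x ≠ 0}
    (Set.sep_subset _ _) ⟨α, hα, hE.root_nonisotropic α hα⟩ fun h => (h.superset hγ).2 hαγ
  replace hαy : B α y = 0 := not_not.mp fun h => hαy ⟨hyR, h⟩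
  refine ⟨x, hxR, hαx, fun hspan => hxy ?_⟩
  set f := W.liftQ (B.flip y) (Submodule.span_le.mpr (by simp [ha]))
  have hker : Submodule.span ℝ {W.mkQ α, W.mkQ β} ≤ LinearMap.ker f := by
    rw [Submodule.span_le, Set.insert_subset_iff, Set.singleton_subset_iff]
    simp [f, hαy, apply_eq_neg_two_mul_of_two_smul_add_eq_zero B hδ]
  simpa [f] using hker hspan

theorem false_of_two_smul_add_eq_zero (hE : IsEARS B R l n) {P : Set V} {a α β : V} {m : ℕ}
    (ha : B a = 0) (hPR : P ⊆ R)
    (hbase : IsBaseSet ((Submodule.span ℝ {a}).mkQ '' R) ((Submodule.span ℝ {a}).mkQ '' P) m)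
    (hm : 2 < m) (hα : α ∈ P) (hβ : β ∈ P) (hδ : B ((2 : ℝ) • α + β) = 0) : False := by
  classical
  set π := (Submodule.span ℝ {a}).mkQ
  have hli : LinearIndepOn ℝ id (π '' P) := hbase.2.2.2.1
  set b := Module.Basis.extend hli
  have hext : π '' P ⊆ hli.extend (Set.subset_univ _) := hli.subset_extend _
  let idx : ∀ γ ∈ P, hli.extend (Set.subset_univ _) := fun γ hγ => ⟨π γ, hext ⟨γ, hγ, rfl⟩⟩
  have hb : ∀ γ (hγ : γ ∈ P), b (idx γ hγ) = π γ := fun γ hγ =>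
    Module.Basis.extend_apply_self hli _
  have hidx : ∀ γ γ' (hγ : γ ∈ P) (hγ' : γ' ∈ P), π γ ≠ π γ' → idx γ hγ ≠ idx γ' hγ' :=
    fun γ γ' hγ hγ' h h' => h (congrArg Subtype.val h')
  have hπ := mkQ_ne_of_two_smul_add_eq_zero B ha (hE.root_nonisotropic α (hPR hα)) hδ
  have hcoord : ∀ x ∈ R, B α x ≠ 0 → ∀ i, i ≠ idx α hα → i ≠ idx β hβ → b.coord i (π x) = 0 :=
    fun x hx hαx i hi hi' => hE.coord_eq_zero_of_two_smul_add_eq_zero π b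
      (fun x hx => hbase.coord_nonneg_or_nonpos b (by rintro _ ⟨γ, hγ, rfl⟩; exact ⟨_, hb γ hγ⟩)
        (Set.mem_image_of_mem π hx))
      (hPR hα) (hPR hβ) hδ (hb α hα) (hb β hβ) (hidx α β hα hβ hπ) hi hi' hx hαx
  -- a third simple root, which the coordinate argument forces to be orthogonal to `α`
  obtain ⟨_, ⟨γ, hγ, rfl⟩, hγ'⟩ := Set.not_subset.mp fun h : π '' P ⊆ {π α, π β} => by
    have := Set.ncard_le_ncard h
    have := hbase.2.2.1
    have := Set.ncard_insert_le (π α) {π β}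
    simp only [Set.ncard_singleton] at this
    omega
  simp only [Set.mem_insert_iff, Set.mem_singleton_iff, not_or] at hγ'
  have hαγ : B α γ = 0 := by
    by_contra h
    have := hcoord γ (hPR hγ) h (idx γ hγ) (hidx γ α hγ hα hγ'.1) (hidx γ β hγ hβ hγ'.2)
    simp [← hb γ hγ] at this
  obtain ⟨x, hxR, hαx, hx⟩ := hE.exists_mkQ_notMem_span_pair ha (hPR hα) (hPR hγ) hαγ hδ
  apply hx
  rw [← hb α hα, ← hb β hβ, ← Set.image_pair, b.mem_span_image]
  intro i hi
  by_contra h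
  simp only [Set.mem_insert_iff, Set.mem_singleton_iff, not_or] at h
  exact Finsupp.mem_support_iff.mp hi (hcoord x hxR hαx i h.1 h.2)

lemma pairing_le_three (hE : IsEARS B R l n) {P : Set V} {a α β : V} {m q : ℕ} (ha : B a = 0)
    (hPR : P ⊆ R)
    (hbase : IsBaseSet ((Submodule.span ℝ {a}).mkQ '' R) ((Submodule.span ℝ {a}).mkQ '' P) m)
    (hm : 2 < m) (hα : α ∈ P) (hβ : β ∈ P) (hpair : 2 * B β α = -B β β)
    (hq : 2 * B α β = -(q : ℝ) * B α α) : q ≤ 3 := by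
  have hδ := apply_two_smul_add_self B hE.symm hpair hq
  have h4 : (q : ℝ) ≤ 4 := by
    nlinarith [hE.posSemidef ((2 : ℝ) • α + β), hE.apply_self_pos (hPR hα)]
  refine Nat.le_of_lt_succ ((show q ≤ 4 by exact_mod_cast h4).lt_of_ne fun h => ?_)
  subst h
  exact hE.false_of_two_smul_add_eq_zero ha hPR hbase hm hα hβ
    (hE.apply_eq_zero_of_isotropic (by rw [hδ]; norm_num))

end IsEARS

namespace IsKG

variable {V : Type*} [AddCommGroup V] [Module ℝ V] {B : LinearMap.BilinForm ℝ V} {R P : Set V}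
  {l n : ℕ} {a α : V} {k : V → ℕ} {g : V → Bool}

lemma mem (hkg : IsKG R a P k g) (hα : α ∈ P) : α ∈ R :=
  ((hkg α hα).2.superset (Or.inl ⟨1, 0, Or.inl rfl, by simp⟩)).1

lemma add_smul_mem (hkg : IsKG R a P k g) (hα : α ∈ P) : α + (k α : ℝ) • a ∈ R :=
  ((hkg α hα).2.superset (Or.inl ⟨1, 1, Or.inl rfl, by simp [Nat.cast_smul_eq_nsmul]⟩)).1

lemma two_smul_add_smul_mem (hkg : IsKG R a P k g) (hα : α ∈ P) (hg : g α = true) :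
    (2 : ℝ) • α + (k α : ℝ) • a ∈ R :=
  ((hkg α hα).2.superset (Or.inr ⟨hg, 1, 1, Or.inl rfl, odd_one,
    by simp [ofNat_smul_eq_nsmul, Nat.cast_smul_eq_nsmul]⟩)).1

lemma dvd_of_add_smul_mem (hkg : IsKG R a P k g) (hα : α ∈ P)
    (hli : LinearIndependent ℝ ![α, a]) {n : ℤ} (h : α + (n : ℝ) • a ∈ R) : (k α : ℤ) ∣ n := by
  have hspan : α + (n : ℝ) • a ∈ Submodule.span ℝ {α, a} :=
    add_mem (Submodule.subset_span (by simp))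
      (Submodule.smul_mem _ _ (Submodule.subset_span (by simp)))
  rcases (hkg α hα).2.subset ⟨h, hspan⟩ with ⟨ε, m, -, he⟩ | ⟨-, ε, m, -, -, he⟩
  · rw [← Int.cast_smul_eq_zsmul ℝ, ← Int.cast_smul_eq_zsmul ℝ] at he
    have := LinearIndependent.pair_iff.mp hli (1 - ε) (n - (m * k α : ℤ))
      (by linear_combination (norm := module) he)
    exact ⟨m, by rw [mul_comm]; exact_mod_cast sub_eq_zero.mp this.2⟩
  · rw [← Int.cast_smul_eq_zsmul ℝ, ← Int.cast_smul_eq_zsmul ℝ] at he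
    have := LinearIndependent.pair_iff.mp hli (1 - (2 * ε : ℤ)) (n - (m * k α : ℤ))
      (by linear_combination (norm := module) he)
    have : (1 - 2 * ε : ℤ) = 0 := by exact_mod_cast this.1
    omega

lemma dvd_of_smul_add_smul_mem (hkg : IsKG R a P k g) (hE : IsEARS B R l n) (ha : B a = 0)
    (ha0 : a ≠ 0) {γ v : V} (hγ : γ ∈ P) (hv : v ∈ R) {t s : ℝ} (ht : t ≠ 0)
    (hvs : t • v + s • a ∈ R) {c : ℤ} (hc : 2 * B v γ / (t * B v v) * s = c) :
    (k γ : ℤ) ∣ c :=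
  hkg.dvd_of_add_smul_mem hγ
    (linearIndependent_pair_of_apply_eq_zero B (hE.root_nonisotropic γ (hkg.mem hγ)) ha ha0)
    (hc ▸ hE.add_smul_mem_of_smul_add_smul_mem ha hv ht hvs (hkg.mem hγ))

lemma eq_false_of_odd_pairing (hkg : IsKG R a P k g) (hE : IsEARS B R l n) (ha : B a = 0)
    {β x : V} (hβ : β ∈ P) (hx : x ∈ R) {c : ℤ} (hc : Odd c) (h : 2 * B β x = c * B β β) :
    g β = false := by
  by_contra hg
  obtain ⟨m, hm⟩ := hE.exists_apply_eq_intCast_mul_of_two_smul_add_smul_mem ha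
    (hkg.two_smul_add_smul_mem hβ (by simpa using hg)) hx
  have hcm : (c : ℝ) = 2 * m :=
    mul_right_cancel₀ (hE.root_nonisotropic β (hkg.mem hβ)) (by linarith)
  exact (Int.not_even_iff_odd.mpr hc) ⟨m, by exact_mod_cast hcm.trans (two_mul _)⟩

lemma eq_two_and_dvd_of_eq_true (hkg : IsKG R a P k g) (hE : IsEARS B R l n) (ha : B a = 0)
    (ha0 : a ≠ 0) {β : V} (hα : α ∈ P) (hβ : β ∈ P) {q : ℕ} (hq0 : 0 < q) (hq3 : q ≤ 3)
    (hq : 2 * B α β = -(q : ℝ) * B α α) (hg : g α = true) : q = 2 ∧ k β ∣ k α := by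
  have hq2 : q = 2 := by
    by_contra hq2
    have hodd : Odd (-(q : ℤ)) := by
      obtain rfl | rfl : q = 1 ∨ q = 3 := by omega
      all_goals decide
    simpa [hg] using hkg.eq_false_of_odd_pairing hE ha hα (hkg.mem hβ) hodd (by push_cast; linarith)
  subst hq2
  have hA := hE.root_nonisotropic α (hkg.mem hα)
  refine ⟨rfl, Int.natCast_dvd_natCast.mp <| Int.dvd_neg.mp <|
    hkg.dvd_of_smul_add_smul_mem hE ha ha0 hβ (hkg.mem hα) two_ne_zero
      (hkg.two_smul_add_smul_mem hα hg) ?_⟩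
  push_cast
  field_simp
  linear_combination (k α / 2 : ℝ) * hq

end IsKG

lemma pairing_cases {A X : ℝ} {q kα kβ : ℕ} {gα : Bool} (hX : X = -(q : ℝ) * A) (hq : 0 < q)
    (hq3 : q ≤ 3) (hkα : 0 < kα) (hdvd : kα ∣ kβ) (hdvd' : kβ ∣ q * kα)
    (hg : gα = true → q = 2 ∧ kβ ∣ kα) :
    (X = -(1 : ℝ) * A ∧ kβ = 1 * kα ∧ gα = false) ∨
    (X = -(2 : ℝ) * A ∧ kβ = 1 * kα ∧ gα = false) ∨
    (X = -(3 : ℝ) * A ∧ kβ = 1 * kα ∧ gα = false) ∨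
    (X = -(2 : ℝ) * A ∧ kβ = 2 * kα ∧ gα = false) ∨
    (X = -(3 : ℝ) * A ∧ kβ = 3 * kα ∧ gα = false) ∨
    (X = -(2 : ℝ) * A ∧ kβ = 1 * kα ∧ gα = true) := by
  obtain ⟨r, rfl⟩ := hdvd
  have hr : r ∣ q := Nat.dvd_of_mul_dvd_mul_left hkα (by simpa [mul_comm] using hdvd')
  have hg' : gα = true → q = 2 ∧ r = 1 := fun h =>
    ⟨(hg h).1, Nat.dvd_one.mp (Nat.dvd_of_mul_dvd_mul_left hkα (by simpa using (hg h).2))⟩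
  have hrq := Nat.le_of_dvd hq hr
  subst hX
  rw [mul_comm kα r]
  interval_cases q <;> interval_cases r <;> cases gα <;> simp_all

theorem stmt11_general {V : Type*} [AddCommGroup V] [Module ℝ V]
    (B : LinearMap.BilinForm ℝ V) (R : Set V) (l : ℕ) (hl : 2 ≤ l)
    (hE : IsEARS B R l 2)
    (P : Set V) (a : V) (hfs : IsFundamentalSet B R l P a)
    (k : V → ℕ) (g : V → Bool) (hkg : IsKG R a P k g)
    (α β : V) (hα : α ∈ P) (hβ : β ∈ P)
    (hpair : 2 * B β α = -(B β β)) :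
    g β = false ∧ k α ∣ k β ∧
      ((2 * B α β = -(1 : ℝ) * B α α ∧ k β = 1 * k α ∧ g α = false) ∨
       (2 * B α β = -(2 : ℝ) * B α α ∧ k β = 1 * k α ∧ g α = false) ∨
       (2 * B α β = -(3 : ℝ) * B α α ∧ k β = 1 * k α ∧ g α = false) ∨
       (2 * B α β = -(2 : ℝ) * B α α ∧ k β = 2 * k α ∧ g α = false) ∨
       (2 * B α β = -(3 : ℝ) * B α α ∧ k β = 3 * k α ∧ g α = false) ∨
       (2 * B α β = -(2 : ℝ) * B α α ∧ k β = 1 * k α ∧ g α = true)) := by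
  obtain ⟨-, haa, ⟨b, -, -, -, hab⟩, hPR, -, -, hbase⟩ := hfs
  have ha : B a = 0 := hE.apply_eq_zero_of_isotropic haa
  have ha0 : a ≠ 0 := by rintro rfl; simpa using hab 1 0 (by simp)
  have hA := hE.root_nonisotropic α (hPR hα)
  have hB := hE.root_nonisotropic β (hPR hβ)
  obtain ⟨q, hq0, hq⟩ := hE.exists_nat_pairing (hPR hα) (hPR hβ) hpair
  have hq3 := hE.pairing_le_three ha hPR hbase (by omega) hα hβ hpair hq
  have hkαβ : k α ∣ k β := Int.natCast_dvd_natCast.mp <| Int.dvd_neg.mp <|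
    hkg.dvd_of_smul_add_smul_mem hE ha ha0 hα (hPR hβ) one_ne_zero
      (by simpa using hkg.add_smul_mem hβ)
      (by push_cast; field_simp; linear_combination (k β : ℝ) * hpair)
  have hkβα : k β ∣ q * k α := Int.natCast_dvd_natCast.mp <| Int.dvd_neg.mp <|
    hkg.dvd_of_smul_add_smul_mem hE ha ha0 hβ (hPR hα) one_ne_zero
      (by simpa using hkg.add_smul_mem hα)
      (by push_cast; field_simp; linear_combination (k α : ℝ) * hq)
  have hgα : g α = true → q = 2 ∧ k β ∣ k α :=
    hkg.eq_two_and_dvd_of_eq_true hE ha ha0 hα hβ hq0 hq3 hq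
  have hgβ : g β = false :=
    hkg.eq_false_of_odd_pairing hE ha hβ (hPR hα) (c := -1) (by decide) (by push_cast; linarith)
  exact ⟨hgβ, hkαβ, pairing_cases hq hq0 hq3 (hkg α hα).1 hkαβ hkβα hgα⟩

/-- For `α, β ∈ Π` with `(β^∨, α) = −1` in a reduced elliptic root
system of rank `≥ 2`: `g(β) = ∅`, `k(α) ∣ k(β)`, and
`((α^∨,β), k(β)/k(α), g(α))` is one of
`(−1,1,∅), (−2,1,∅), (−3,1,∅), (−2,2,∅), (−3,3,∅), (−2,1,2ℤ+1)`. -/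
theorem stmt11 {V : Type*} [AddCommGroup V] [Module ℝ V]
    (B : LinearMap.BilinForm ℝ V) (R : Set V) (l : ℕ) (hl : 2 ≤ l)
    (hE : IsEARS B R l 2) (hred : IsReducedRS R)
    (P : Set V) (a : V) (hfs : IsFundamentalSet B R l P a)
    (k : V → ℕ) (g : V → Bool) (hkg : IsKG R a P k g)
    (α β : V) (hα : α ∈ P) (hβ : β ∈ P)
    (hpair : 2 * B β α = -(B β β)) :
    g β = false ∧ k α ∣ k β ∧
      ((2 * B α β = -(1 : ℝ) * B α α ∧ k β = 1 * k α ∧ g α = false) ∨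
       (2 * B α β = -(2 : ℝ) * B α α ∧ k β = 1 * k α ∧ g α = false) ∨
       (2 * B α β = -(3 : ℝ) * B α α ∧ k β = 1 * k α ∧ g α = false) ∨
       (2 * B α β = -(2 : ℝ) * B α α ∧ k β = 2 * k α ∧ g α = false) ∨
       (2 * B α β = -(3 : ℝ) * B α α ∧ k β = 3 * k α ∧ g α = false) ∨
       (2 * B α β = -(2 : ℝ) * B α α ∧ k β = 1 * k α ∧ g α = true)) :=
  stmt11_general B R l hl hE P a hfs k g hkg α β hα hβ hpair
end

section
/- For every positive integer k, [(ad Ē₁)^k(Ē₂), (ad F̄₁)^k(F̄₂)] = k!·(∏_{m=1}^{k−1}((γ₁^∨,γ₂) + m))·(k·(γ₁,γ₂^∨)·h̄_{γ₁^∨} + (γ₁^∨,γ₂)·h̄_{γ₂^∨}). -/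
/-!
Put `E n := (ad E₁)^n E₂`, `F n := (ad F₁)^n F₂`, `a := (γ₁^∨, γ₂)` and `b := (γ₁, γ₂^∨)`.
Since `ad F₁` kills `E₂` and `ad E₁` kills `F₂`, the `sl₂`-triple `(E₁, h̄_{γ₁^∨}, F₁)` treats
`E₂` and `F₂` as extremal weight vectors, so `⁅F₁, E (n+1)⁆ = -(n+1)(a+n) E n` and likewise
`⁅E₁, F (n+1)⁆ = -(n+1)(a+n) F n`. Expanding `⁅E (n+1), F (n+1)⁆` by the Jacobi identity, an
induction on `n` computes it together with the off-diagonal bracket `⁅E (n+1), F n⁆`, a multiple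
of `E₁`; both carry the factor `c(n+1)`, where `c(n+2) = (n+2)(a+n+1) c(n+1)`.
-/

open LieAlgebra Finset

section

variable {R L : Type*} [CommRing R] [LieRing L] [LieAlgebra R L]

theorem ad_pow_succ_apply (x y : L) (n : ℕ) :
    (ad R L x ^ (n + 1)) y = ⁅x, (ad R L x ^ n) y⁆ := by
  rw [pow_succ', Module.End.mul_apply, ad_apply]

theorem lie_ad_pow_of_lie_eq_smul {h x y : L} {α β : R} (hx : ⁅h, x⁆ = α • x)
    (hy : ⁅h, y⁆ = β • y) (n : ℕ) :
    ⁅h, (ad R L x ^ n) y⁆ = (n * α + β) • (ad R L x ^ n) y := by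
  induction n with
  | zero => simpa using hy
  | succ n ih =>
    rw [ad_pow_succ_apply, leibniz_lie, hx, ih, smul_lie, lie_smul, ← ad_pow_succ_apply]
    match_scalars
    ring

theorem lie_ad_pow_succ_of_lie_eq_zero {h e f y : L} {β : R} (hef : ⁅e, f⁆ = h)
    (he : ⁅h, e⁆ = (2 : R) • e) (hfy : ⁅f, y⁆ = 0) (hy : ⁅h, y⁆ = β • y) (n : ℕ) :
    ⁅f, (ad R L e ^ (n + 1)) y⁆ = (-((n + 1) * (β + n))) • (ad R L e ^ n) y := by
  have hfe : ⁅f, e⁆ = -h := by rw [← lie_skew, hef]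
  induction n with
  | zero => simp [leibniz_lie f e y, hfe, hfy, hy]
  | succ n ih =>
    rw [ad_pow_succ_apply e y (n + 1), leibniz_lie, hfe, neg_lie,
      lie_ad_pow_of_lie_eq_smul he hy, ih, lie_smul, ← ad_pow_succ_apply]
    match_scalars
    ring

/-- `h₁, h₂` play the coroots `h̄_{γ₁^∨}, h̄_{γ₂^∨}`, and `a, b` the Cartan integers
`(γ₁^∨, γ₂)` and `(γ₁, γ₂^∨)`. -/
structure ChevalleyRelations (e₁ e₂ f₁ f₂ h₁ h₂ : L) (a b : R) : Prop where
  lie_e₁_f₁ : ⁅e₁, f₁⁆ = h₁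
  lie_e₂_f₂ : ⁅e₂, f₂⁆ = h₂
  lie_e₁_f₂ : ⁅e₁, f₂⁆ = 0
  lie_e₂_f₁ : ⁅e₂, f₁⁆ = 0
  lie_h₁_e₁ : ⁅h₁, e₁⁆ = (2 : R) • e₁
  lie_h₁_e₂ : ⁅h₁, e₂⁆ = a • e₂
  lie_h₂_e₁ : ⁅h₂, e₁⁆ = b • e₁
  lie_h₁_f₁ : ⁅h₁, f₁⁆ = (-2 : R) • f₁
  lie_h₁_f₂ : ⁅h₁, f₂⁆ = (-a) • f₂

def adPowLieCoeff (a : R) (k : ℕ) : R :=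
  k.factorial * ∏ m ∈ Icc 1 (k - 1), (a + m)

theorem adPowLieCoeff_one (a : R) : adPowLieCoeff a 1 = 1 := by
  simp [adPowLieCoeff]

theorem adPowLieCoeff_succ_succ (a : R) (n : ℕ) :
    adPowLieCoeff a (n + 2) = ((n + 2) * (a + (n + 1))) * adPowLieCoeff a (n + 1) := by
  rw [adPowLieCoeff, adPowLieCoeff, show n + 2 - 1 = n + 1 by omega, Nat.add_sub_cancel,
    prod_Icc_succ_top (Nat.le_add_left 1 n), Nat.factorial_succ]
  push_cast
  ring

namespace ChevalleyRelations

variable {e₁ e₂ f₁ f₂ h₁ h₂ : L} {a b : R}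

theorem lie_f₁_ad_pow_succ (H : ChevalleyRelations e₁ e₂ f₁ f₂ h₁ h₂ a b) (n : ℕ) :
    ⁅f₁, (ad R L e₁ ^ (n + 1)) e₂⁆ = (-((n + 1) * (a + n))) • (ad R L e₁ ^ n) e₂ :=
  lie_ad_pow_succ_of_lie_eq_zero H.lie_e₁_f₁ H.lie_h₁_e₁
    (by rw [← lie_skew, H.lie_e₂_f₁, neg_zero]) H.lie_h₁_e₂ n

theorem lie_e₁_ad_pow_succ (H : ChevalleyRelations e₁ e₂ f₁ f₂ h₁ h₂ a b) (n : ℕ) :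
    ⁅e₁, (ad R L f₁ ^ (n + 1)) f₂⁆ = (-((n + 1) * (a + n))) • (ad R L f₁ ^ n) f₂ :=
  lie_ad_pow_succ_of_lie_eq_zero (h := -h₁) (by rw [← lie_skew, H.lie_e₁_f₁])
    (by rw [neg_lie, H.lie_h₁_f₁]; module) H.lie_e₁_f₂ (by rw [neg_lie, H.lie_h₁_f₂]; module) n

theorem lie_ad_pow_succ_and_lie_ad_pow (H : ChevalleyRelations e₁ e₂ f₁ f₂ h₁ h₂ a b) (n : ℕ) :
    ⁅(ad R L e₁ ^ (n + 1)) e₂, (ad R L f₁ ^ (n + 1)) f₂⁆ =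
        adPowLieCoeff a (n + 1) • (((n + 1 : R) * b) • h₁ + a • h₂) ∧
      ⁅(ad R L e₁ ^ (n + 1)) e₂, (ad R L f₁ ^ n) f₂⁆ = (-(adPowLieCoeff a (n + 1) * b)) • e₁ := by
  have lie_e₁_h₁ : ⁅e₁, h₁⁆ = (-2 : R) • e₁ := by rw [← lie_skew, H.lie_h₁_e₁]; module
  have lie_e₁_h₂ : ⁅e₁, h₂⁆ = (-b) • e₁ := by rw [← lie_skew, H.lie_h₂_e₁]; module
  have lie_f₁_e₁ : ⁅f₁, e₁⁆ = -h₁ := by rw [← lie_skew, H.lie_e₁_f₁]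
  have lie_ad_pow_f₁ (n : ℕ) :
      ⁅(ad R L e₁ ^ (n + 1)) e₂, f₁⁆ = ((n + 1) * (a + n)) • (ad R L e₁ ^ n) e₂ := by
    rw [← lie_skew, H.lie_f₁_ad_pow_succ]; module
  induction n with
  | zero =>
    have hoff : ⁅(ad R L e₁ ^ 1) e₂, f₂⁆ = (-b) • e₁ := by
      rw [pow_one, ad_apply, lie_lie, H.lie_e₂_f₂, H.lie_e₁_f₂, lie_zero, sub_zero, lie_e₁_h₂]
    simp only [zero_add, Nat.cast_zero, adPowLieCoeff_one]
    refine ⟨?_, by simpa using hoff⟩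
    rw [ad_pow_succ_apply f₁ f₂ 0, leibniz_lie, lie_ad_pow_f₁ 0]
    simp only [pow_zero, Module.End.one_apply, smul_lie, H.lie_e₂_f₂, hoff, lie_smul, lie_f₁_e₁]
    module
  | succ n ih =>
    obtain ⟨ihdiag, ihoff⟩ := ih
    have hoff : ⁅(ad R L e₁ ^ (n + 2)) e₂, (ad R L f₁ ^ (n + 1)) f₂⁆ =
        (-(adPowLieCoeff a (n + 2) * b)) • e₁ := by
      rw [ad_pow_succ_apply e₁ e₂ (n + 1), lie_lie, ihdiag, H.lie_e₁_ad_pow_succ, lie_smul,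
        lie_smul, ihoff, lie_add, lie_smul, lie_smul, lie_e₁_h₁, lie_e₁_h₂, adPowLieCoeff_succ_succ]
      module
    refine ⟨?_, hoff⟩
    rw [ad_pow_succ_apply f₁ f₂ (n + 1), leibniz_lie, lie_ad_pow_f₁ (n + 1), smul_lie, ihdiag, hoff,
      lie_smul, lie_f₁_e₁, adPowLieCoeff_succ_succ]
    push_cast
    module

theorem lie_ad_pow_ad_pow (H : ChevalleyRelations e₁ e₂ f₁ f₂ h₁ h₂ a b) {k : ℕ} (hk : 0 < k) :
    ⁅(ad R L e₁ ^ k) e₂, (ad R L f₁ ^ k) f₂⁆ =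
      adPowLieCoeff a k • (((k : R) * b) • h₁ + a • h₂) := by
  obtain ⟨n, rfl⟩ : ∃ n, k = n + 1 := ⟨k - 1, by omega⟩
  simpa using (H.lie_ad_pow_succ_and_lie_ad_pow n).1

end ChevalleyRelations

end

theorem stmt14_general {L : Type*} [LieRing L] [LieAlgebra ℂ L]
    {V' : Type*} [AddCommGroup V'] [Module ℂ V']
    (B : LinearMap.BilinForm ℂ V')
    (hsymm : ∀ u v, B u v = B v u)
    (γ₁ γ₂ : V') (hγ₁ : B γ₁ γ₁ ≠ 0)
    (h : V' → L) (E₁ E₂ F₁ F₂ : L)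
    (hhE1 : ∀ σ : V', ⁅h σ, E₁⁆ = B σ γ₁ • E₁)
    (hhE2 : ∀ σ : V', ⁅h σ, E₂⁆ = B σ γ₂ • E₂)
    (hhF1 : ∀ σ : V', ⁅h σ, F₁⁆ = -(B σ γ₁) • F₁)
    (hhF2 : ∀ σ : V', ⁅h σ, F₂⁆ = -(B σ γ₂) • F₂)
    (hEF11 : ⁅E₁, F₁⁆ = h ((2 / B γ₁ γ₁) • γ₁))
    (hEF22 : ⁅E₂, F₂⁆ = h ((2 / B γ₂ γ₂) • γ₂))
    (hEF12 : ⁅E₁, F₂⁆ = 0)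
    (hEF21 : ⁅E₂, F₁⁆ = 0) :
    ∀ k : ℕ, 0 < k →
      ⁅((LieAlgebra.ad ℂ L E₁) ^ k) E₂, ((LieAlgebra.ad ℂ L F₁) ^ k) F₂⁆
        = ((k.factorial : ℂ) *
            ∏ m ∈ Finset.Icc 1 (k - 1), (2 * B γ₁ γ₂ / B γ₁ γ₁ + (m : ℂ))) •
          (((k : ℂ) * (2 * B γ₁ γ₂ / B γ₂ γ₂)) • h ((2 / B γ₁ γ₁) • γ₁) +
            (2 * B γ₁ γ₂ / B γ₁ γ₁) • h ((2 / B γ₂ γ₂) • γ₂)) := by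
  intro k hk
  have coroot₁_γ₁ : B ((2 / B γ₁ γ₁) • γ₁) γ₁ = 2 := by simp [hγ₁]
  have coroot₁_γ₂ : B ((2 / B γ₁ γ₁) • γ₁) γ₂ = 2 * B γ₁ γ₂ / B γ₁ γ₁ := by
    simp only [map_smul, LinearMap.smul_apply, smul_eq_mul]; ring
  have coroot₂_γ₁ : B ((2 / B γ₂ γ₂) • γ₂) γ₁ = 2 * B γ₁ γ₂ / B γ₂ γ₂ := by
    simp only [map_smul, LinearMap.smul_apply, hsymm γ₂ γ₁, smul_eq_mul]; ring
  have H : ChevalleyRelations E₁ E₂ F₁ F₂ (h ((2 / B γ₁ γ₁) • γ₁)) (h ((2 / B γ₂ γ₂) • γ₂))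
      (2 * B γ₁ γ₂ / B γ₁ γ₁) (2 * B γ₁ γ₂ / B γ₂ γ₂) :=
    { lie_e₁_f₁ := hEF11
      lie_e₂_f₂ := hEF22
      lie_e₁_f₂ := hEF12
      lie_e₂_f₁ := hEF21
      lie_h₁_e₁ := by rw [hhE1, coroot₁_γ₁]
      lie_h₁_e₂ := by rw [hhE2, coroot₁_γ₂]
      lie_h₂_e₁ := by rw [hhE1, coroot₂_γ₁]
      lie_h₁_f₁ := by rw [hhF1, coroot₁_γ₁]
      lie_h₁_f₂ := by rw [hhF2, coroot₁_γ₂] }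
  exact H.lie_ad_pow_ad_pow hk

/-- In a complex Lie algebra containing `h̄_γ, Ē₁, Ē₂, F̄₁, F̄₂`
with the Heisenberg-type relations of Lemma 5.1, one has, for every `k ≥ 1`,
`[(ad Ē₁)^k Ē₂, (ad F̄₁)^k F̄₂] =
  k! (∏_{m=1}^{k-1} ((γ₁^∨,γ₂)+m)) (k (γ₁,γ₂^∨) h̄_{γ₁^∨} + (γ₁^∨,γ₂) h̄_{γ₂^∨})`. -/
theorem stmt14 {L : Type*} [LieRing L] [LieAlgebra ℂ L]
    {V' : Type*} [AddCommGroup V'] [Module ℂ V']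
    (hdim : Module.finrank ℂ V' = 2)
    (B : LinearMap.BilinForm ℂ V')
    (hsymm : ∀ u v, B u v = B v u)
    (hnd : ∀ v : V', (∀ u : V', B v u = 0) → v = 0)
    (γ₁ γ₂ : V') (hγ₁ : B γ₁ γ₁ ≠ 0) (hγ₂ : B γ₂ γ₂ ≠ 0)
    (h : V' → L) (E₁ E₂ F₁ F₂ : L)
    (hlin : ∀ (x x' : ℂ) (σ τ : V'), h (x • σ + x' • τ) = x • h σ + x' • h τ)
    (hhh : ∀ σ τ : V', ⁅h σ, h τ⁆ = 0)
    (hhE1 : ∀ σ : V', ⁅h σ, E₁⁆ = B σ γ₁ • E₁)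
    (hhE2 : ∀ σ : V', ⁅h σ, E₂⁆ = B σ γ₂ • E₂)
    (hhF1 : ∀ σ : V', ⁅h σ, F₁⁆ = -(B σ γ₁) • F₁)
    (hhF2 : ∀ σ : V', ⁅h σ, F₂⁆ = -(B σ γ₂) • F₂)
    (hEF11 : ⁅E₁, F₁⁆ = h ((2 / B γ₁ γ₁) • γ₁))
    (hEF22 : ⁅E₂, F₂⁆ = h ((2 / B γ₂ γ₂) • γ₂))
    (hEF12 : ⁅E₁, F₂⁆ = 0)
    (hEF21 : ⁅E₂, F₁⁆ = 0) :
    ∀ k : ℕ, 0 < k →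
      ⁅((LieAlgebra.ad ℂ L E₁) ^ k) E₂, ((LieAlgebra.ad ℂ L F₁) ^ k) F₂⁆
        = ((k.factorial : ℂ) *
            ∏ m ∈ Finset.Icc 1 (k - 1), (2 * B γ₁ γ₂ / B γ₁ γ₁ + (m : ℂ))) •
          (((k : ℂ) * (2 * B γ₁ γ₂ / B γ₂ γ₂)) • h ((2 / B γ₁ γ₁) • γ₁) +
            (2 * B γ₁ γ₂ / B γ₁ γ₁) • h ((2 / B γ₂ γ₂) • γ₂)) :=
  stmt14_general B hsymm γ₁ γ₂ hγ₁ h E₁ E₂ F₁ F₂ hhE1 hhE2 hhF1 hhF2 hEF11 hEF22 hEF12 hEF21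
end

section
/- Let R be a reduced elliptic root system of rank l ≥ 2 with fundamental-set Π ∪ {a} and associated maps k, g, where the affine root system W_Π·Π is of type D_{l+1}^{(2)}, k(α) = 1 for all α ∈ Π, g(α₀) = 2ℤ+1, and g(α) = ∅ for α ∈ Π ∖ {α₀}. Define L_sh, L_lg, L_ex ⊆ M = ℤδ ⊕ ℤa by α₁ + L_sh = R ∩ (α₁ + M), α₂ + L_lg = R ∩ (α₂ + M), and 2α₁ + L_ex = R ∩ (2α₁ + M). Then L_sh = M, L_lg = 2M ∪ (a + 2M), and L_ex = (2δ + a + 4M) ∪ (2δ + 3a + 4M). -/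
noncomputable section

/-- `ω : 𝒜 → ℂ^×` is a tuning: it is nonzero on
`𝒜 = {(α,β) : (α,β^∨) = -1}` and `ω(α,β)ω(β,α) = 1` whenever also `(α^∨,β) = -1`. -/
def IsTuning {V : Type*} [AddCommGroup V] [Module ℝ V]
    (B : LinearMap.BilinForm ℝ V) (P : Set V) (ω : V → V → ℂ) : Prop :=
  ∀ α ∈ P, ∀ β ∈ P,
    (2 * B α β = -(B β β) → ω α β ≠ 0) ∧
    (2 * B α β = -(B β β) → 2 * B α β = -(B α α) → ω α β * ω β α = 1)

/-- `δ = δ(Π)`: a positive-integer combination of the elements of `Π` with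
`ℤδ = (ℤΠ)⁰`. -/
def IsDelta {V : Type*} [AddCommGroup V] [Module ℝ V]
    (B : LinearMap.BilinForm ℝ V) (P : Set V) (δ : V) : Prop :=
  (∃ s : Finset V, (s : Set V) = P ∧
    ∃ c : V → ℕ, (∀ α ∈ s, 0 < c α) ∧ δ = ∑ α ∈ s, (c α : ℤ) • α) ∧
  (AddSubgroup.closure {δ} : Set V) = (AddSubgroup.closure P : Set V) ∩ nullSet B

end

/-- The affine root system `W_Π·Π` is of type `D_{l+1}^{(2)}`, realized (after rescaling
the form) by an enumeration `αf : Fin (l+1) → V` of `Π = {α₀, α₁, …, α_l}` with the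
prescribed Gram matrix: `(α₀,α₀) = (α₁,α₁) = 1`, `(α_j,α_j) = 2` for `2 ≤ j ≤ l`,
`(α₁,α₂) = −1`, `(α_j,α_{j+1}) = −1` for `2 ≤ j ≤ l−1`, `(α_l,α₀) = −1`, and all other
off-diagonal entries `0`. -/
def IsTypeDTwo {V : Type*} [AddCommGroup V] [Module ℝ V]
    (B : LinearMap.BilinForm ℝ V) (P : Set V) (l : ℕ) (αf : Fin (l + 1) → V) : Prop :=
  Function.Injective αf ∧ Set.range αf = P ∧
  B (αf 0) (αf 0) = 1 ∧ B (αf 1) (αf 1) = 1 ∧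
  (∀ j : Fin (l + 1), 2 ≤ (j : ℕ) → B (αf j) (αf j) = 2) ∧
  B (αf 1) (αf 2) = -1 ∧
  (∀ j : ℕ, ∀ _h2 : 2 ≤ j, ∀ _h3 : j + 1 ≤ l,
    B (αf ⟨j, by omega⟩) (αf ⟨j + 1, by omega⟩) = -1) ∧
  B (αf (Fin.last l)) (αf 0) = -1 ∧
  (∀ i j : Fin (l + 1), i ≠ j →
    ¬(({(i : ℕ), (j : ℕ)} : Finset ℕ) = {1, 2} ∨
      (∃ m : ℕ, 2 ≤ m ∧ m + 1 ≤ l ∧ ({(i : ℕ), (j : ℕ)} : Finset ℕ) = {m, m + 1}) ∨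
      ({(i : ℕ), (j : ℕ)} : Finset ℕ) = {l, 0}) →
    B (αf i) (αf j) = 0)

/-!
List the simple roots along the Dynkin diagram `α₁ — α₂ — ⋯ — α_l — α₀` as `β₀, …, β_l`.
The partial sums `β₀ + ⋯ + β_j` have norm `1` for `j < l` and `0` for `j = l`; since `Π` is
linearly independent modulo `ℝa`, this forces `δ = β₀ + ⋯ + β_l`. The reflection in the long root
`β_{j+1}` passes from one partial sum to the next, which carries `c α₀ + ρ` to `c (δ - α₁) + ρ`
and `α₂ + σ` to `δ - α₀ - α₁ + σ` for isotropic `ρ, σ`. In particular `α₁ - δ` is a root, and the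
reflections in `α₁` and `α₁ - δ` give `x + (α₁^∨, x) ℤδ ⊆ R` for every root `x`.

Starting from the roots `±α_i + ℤa` and `±2α₀ + (2ℤ+1)a` given by `k` and `g`, this produces
all of `α₁ + M`, `α₂ + 2ℤδ + ℤa` and `2α₁ + (4ℤ+2)δ + (2ℤ+1)a`. Conversely, a root in
`α₂ + (2ℤ+1)δ + ℤa` or in `2α₁ + 4ℤδ + ℤa` would be carried into `±2α₁ + ℤa`, which
`g(α₁) = ∅` excludes; `2α₁ + (2ℤ+1)δ + ℤa` is reflected into `α₂ + (2ℤ+1)δ + ℤa`; and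
`2α₁ + 2M = 2(α₁ + M)` is excluded by reducedness.
-/

namespace IsEARS

variable {V : Type*} [AddCommGroup V] [Module ℝ V] {B : LinearMap.BilinForm ℝ V} {R : Set V}
  {l n : ℕ}

theorem eq_zero_of_isotropic (hE : IsEARS B R l n) {ν : V} (hν : B ν ν = 0) : B ν = 0 :=
  LinearMap.mem_ker.mp (hE.null_eq ▸ hν : ν ∈ (LinearMap.ker B : Set V))

theorem apply_eq_zero_of_eq_zero (hE : IsEARS B R l n) {ν : V} (hν : B ν = 0) (x : V) :
    B x ν = 0 := by
  rw [hE.symm, hν, LinearMap.zero_apply]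

theorem sub_zsmul_mem (hE : IsEARS B R l n) {β x : V} (hβ : β ∈ R) (hx : x ∈ R) {t : ℤ}
    (ht : 2 * B β x = t * B β β) : x - t • β ∈ R := by
  have hβ₀ := hE.root_nonisotropic β hβ
  have hs : srefl B β x ∈ R := hE.reflect β hβ ▸ Set.mem_image_of_mem _ hx
  have hcoef : 2 * (B β β)⁻¹ * B β x = t := by
    rw [mul_right_comm, ht, mul_inv_cancel_right₀ hβ₀]
  simpa [srefl, hcoef, ← Int.cast_smul_eq_zsmul ℝ] using hs

theorem sub_zsmul_mem_iff (hE : IsEARS B R l n) {β x : V} (hβ : β ∈ R) {t : ℤ}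
    (ht : 2 * B β x = t * B β β) : x - t • β ∈ R ↔ x ∈ R := by
  refine ⟨fun h => ?_, fun h => hE.sub_zsmul_mem hβ h ht⟩
  have ht' : 2 * B β (x - t • β) = (-t : ℤ) * B β β := by
    simp only [map_sub, map_zsmul, zsmul_eq_mul]
    push_cast
    linarith
  simpa using hE.sub_zsmul_mem hβ h ht'

theorem neg_mem (hE : IsEARS B R l n) {x : V} (hx : x ∈ R) : -x ∈ R := by
  have h := hE.sub_zsmul_mem hx hx (t := 2) (by push_cast; ring)
  rwa [two_zsmul, sub_add_cancel_left] at h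

/-- The reflections in `β` and in `β + ν` compose to the translation by `(β^∨, x) ν`. -/
theorem add_zsmul_mem (hE : IsEARS B R l n) {β ν x : V} (hβ : β ∈ R) (hβν : β + ν ∈ R)
    (hν : B ν = 0) {p : ℤ} (hp : 2 * B β x = p * B β β) (hx : x ∈ R) : x + p • ν ∈ R := by
  have hβν' : B (β + ν) = B β := by rw [map_add, hν, add_zero]
  have hνβ : B β ν = 0 := hE.apply_eq_zero_of_eq_zero hν β
  have h := hE.sub_zsmul_mem hβν (hE.sub_zsmul_mem hβ hx hp) (t := -p) (by
    simp only [hβν', map_sub, map_add, map_zsmul, hνβ, zsmul_eq_mul]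
    push_cast
    linarith)
  convert h using 1
  module

theorem add_mul_zsmul_mem (hE : IsEARS B R l n) {β ν x : V} (hβ : β ∈ R) (hβν : β + ν ∈ R)
    (hν : B ν = 0) {p : ℤ} (hp : 2 * B β x = p * B β β) (hx : x ∈ R) (t : ℤ) :
    x + (p * t) • ν ∈ R := by
  have hβν' : B (β + ν) = B β := by rw [map_add, hν, add_zero]
  have hνβ : B β ν = 0 := hE.apply_eq_zero_of_eq_zero hν β
  have hp' (c : ℤ) : 2 * B β (x + c • ν) = p * B β β := by
    rw [map_add, map_zsmul, hνβ, smul_zero, add_zero, hp]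
  induction t using Int.induction_on with
  | zero => simpa using hx
  | succ t ih =>
    convert hE.add_zsmul_mem hβ hβν hν (hp' _) ih using 1
    module
  | pred t ih =>
    have hp'' : 2 * B (β + ν) (x + (p * -t) • ν) = p * B (β + ν) (β + ν) := by
      rw [hβν', hp', map_add, hνβ, add_zero]
    have hβ' : β + ν + -ν ∈ R := by rwa [add_neg_cancel_right]
    convert hE.add_zsmul_mem hβν hβ' (by rw [map_neg, hν, neg_zero]) hp'' ih using 1
    module

theorem add_mul_zsmul_mem_iff (hE : IsEARS B R l n) {β ν x : V} (hβ : β ∈ R)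
    (hβν : β + ν ∈ R) (hν : B ν = 0) {p : ℤ} (hp : 2 * B β x = p * B β β) (t : ℤ) :
    x + (p * t) • ν ∈ R ↔ x ∈ R := by
  refine ⟨fun h => ?_, fun h => hE.add_mul_zsmul_mem hβ hβν hν hp h t⟩
  have hp' : 2 * B β (x + (p * t) • ν) = p * B β β := by
    rw [map_add, map_zsmul, hE.apply_eq_zero_of_eq_zero hν, smul_zero, add_zero, hp]
  simpa [add_assoc, ← add_smul] using hE.add_mul_zsmul_mem hβ hβν hν hp' h (-t)

end IsEARS

theorem Finset.pair_eq_pair_iff {α : Type*} [DecidableEq α] {x y z w : α} :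
    ({x, y} : Finset α) = {z, w} ↔ x = z ∧ y = w ∨ x = w ∧ y = z := by
  rw [← Finset.coe_inj, Finset.coe_pair, Finset.coe_pair, Set.pair_eq_pair_iff]

section FundamentalSet

variable {V : Type*} [AddCommGroup V] [Module ℝ V] {B : LinearMap.BilinForm ℝ V} {R P : Set V}
  {l : ℕ} {a δ : V}

theorem IsFundamentalSet.subset (hfs : IsFundamentalSet B R l P a) : P ⊆ R :=
  hfs.2.2.2.1

theorem IsFundamentalSet.isotropic (hfs : IsFundamentalSet B R l P a) : B a a = 0 := hfs.2.1

theorem IsDelta.isotropic (hδ : IsDelta B P δ) : B δ δ = 0 := by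
  have h : δ ∈ (AddSubgroup.closure {δ} : Set V) := AddSubgroup.subset_closure rfl
  rw [hδ.2] at h
  exact h.2

theorem IsFundamentalSet.linearIndependent_mkQ {ι : Type*} {e : ι → V}
    (hfs : IsFundamentalSet B R l P a) (he : Function.Injective e) (hP : Set.range e = P) :
    LinearIndependent ℝ ((Submodule.span ℝ {a}).mkQ ∘ e) := by
  obtain ⟨-, -, -, -, hPfin, hPcard, hbase⟩ := hfs
  have hinj : Set.InjOn (Submodule.span ℝ {a}).mkQ P :=
    Set.injOn_of_ncard_image_eq (by rw [hbase.2.2.1, hPcard]) hPfin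
  have hinj' : Function.Injective ((Submodule.span ℝ {a}).mkQ ∘ e) := fun i j h =>
    he (hinj (hP ▸ Set.mem_range_self i) (hP ▸ Set.mem_range_self j) h)
  refine (linearIndepOn_id_range_iff hinj').mp ?_
  rw [Set.range_comp, hP]
  exact hbase.2.2.2.1

theorem IsDelta.eq_sum_of_isotropic {ι : Type*} [Fintype ι] {e : ι → V}
    (hfs : IsFundamentalSet B R l P a) (hδ : IsDelta B P δ) (he : Function.Injective e)
    (hP : Set.range e = P) (hsum : B (∑ i, e i) (∑ i, e i) = 0) : δ = ∑ i, e i := by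
  classical
  obtain ⟨⟨s, hsP, c, -, hδs⟩, hcl⟩ := hδ
  have hs : s = Finset.univ.image e := Finset.coe_injective (by simp [hsP, hP])
  rw [hs, Finset.sum_image fun i _ j _ h => he h] at hδs
  have hmem : ∑ i, e i ∈ (AddSubgroup.closure {δ} : Set V) := by
    rw [hcl]
    exact ⟨AddSubgroup.sum_mem _ fun i _ => AddSubgroup.subset_closure (hP ▸ ⟨i, rfl⟩), hsum⟩
  obtain ⟨n, hn⟩ := AddSubgroup.mem_closure_singleton.mp hmem
  have hzero : ∑ i, (n * c (e i) - 1 : ℤ) • e i = 0 := by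
    simp_rw [sub_smul, one_smul, Finset.sum_sub_distrib, mul_smul, ← Finset.smul_sum, ← hδs,
      hn, sub_self]
  have hq : ∑ i, ((n * c (e i) - 1 : ℤ) : ℝ) • (Submodule.span ℝ {a}).mkQ (e i) = 0 := by
    simpa only [map_sum, map_zsmul, map_zero, Int.cast_smul_eq_zsmul]
      using congrArg (Submodule.span ℝ {a}).mkQ hzero
  have hc1 (i : ι) : c (e i) = 1 := by
    have h := Fintype.linearIndependent_iff.mp (hfs.linearIndependent_mkQ he hP) _ hq i
    have h' : n * (c (e i) : ℤ) = 1 := sub_eq_zero.mp (by exact_mod_cast h)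
    exact_mod_cast Int.eq_one_of_mul_eq_one_left (Int.natCast_nonneg _) h'
  simp [hδs, hc1]

end FundamentalSet

namespace IsKG

variable {V : Type*} [AddCommGroup V] [Module ℝ V] {R P : Set V} {a α : V} {k : V → ℕ}
  {g : V → Bool}

theorem zsmul_add_mem (hkg : IsKG R a P k g) (hα : α ∈ P) {ε : ℤ} (hε : ε = 1 ∨ ε = -1)
    (m : ℤ) : ε • α + (m * k α) • a ∈ R := by
  have h : ε • α + (m * k α) • a ∈ kgLine a α (k α) (g α) := Or.inl ⟨ε, m, hε, rfl⟩
  rw [← (hkg α hα).2] at h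
  exact h.1

theorem two_mul_zsmul_add_mem (hkg : IsKG R a P k g) (hα : α ∈ P) (hg : g α = true) {ε : ℤ}
    (hε : ε = 1 ∨ ε = -1) {m : ℤ} (hm : Odd m) : (2 * ε) • α + (m * k α) • a ∈ R := by
  have h : (2 * ε) • α + (m * k α) • a ∈ kgLine a α (k α) (g α) :=
    Or.inr ⟨hg, ε, m, hε, hm, rfl⟩
  rw [← (hkg α hα).2] at h
  exact h.1

theorem eq_one_or_eq_neg_one {B : LinearMap.BilinForm ℝ V} (hkg : IsKG R a P k g) (hα : α ∈ P)
    (hg : g α = false) (hαα : B α α ≠ 0) (ha : B a = 0) {c n : ℤ} (h : c • α + n • a ∈ R) :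
    c = 1 ∨ c = -1 := by
  have hspan : c • α + n • a ∈ Submodule.span ℝ {α, a} :=
    add_mem (zsmul_mem (Submodule.subset_span (by simp)) c)
      (zsmul_mem (Submodule.subset_span (by simp)) n)
  have hline : c • α + n • a ∈ kgLine a α (k α) (g α) := (hkg α hα).2 ▸ ⟨h, hspan⟩
  obtain ⟨ε, m, hε, heq⟩ | ⟨hg', -⟩ := hline
  · have hB := congrArg (fun v => B v α) heq
    simp only [map_add, map_zsmul, ha, LinearMap.smul_apply, smul_zero, add_zero,
      zsmul_eq_mul] at hB
    have hcε : c = ε := by exact_mod_cast mul_right_cancel₀ hαα hB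
    exact hcε ▸ hε
  · simp [hg] at hg'

end IsKG


section Path

variable {V : Type*} {l : ℕ} {αf : Fin (l + 1) → V} {i j : ℕ}

/-- The simple roots listed along the Dynkin diagram `α₁ — α₂ — ⋯ — α_l — α₀` of
`D_{l+1}^{(2)}`: `pathRoot αf i = α_{i+1}` for `i < l` and `pathRoot αf l = α₀`. -/
def pathRoot (αf : Fin (l + 1) → V) (i : ℕ) : V :=
  if h : i < l then αf ⟨i + 1, by omega⟩ else αf 0

def pathSum [AddCommMonoid V] (αf : Fin (l + 1) → V) (j : ℕ) : V :=
  ∑ i ∈ Finset.range (j + 1), pathRoot αf i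

theorem pathRoot_of_lt (hi : i < l) : pathRoot αf i = αf ⟨i + 1, by omega⟩ := dif_pos hi

theorem pathRoot_self : pathRoot αf l = αf 0 := dif_neg (lt_irrefl l)

theorem pathRoot_zero (hl : 1 ≤ l) : pathRoot αf 0 = αf 1 := by
  rw [pathRoot_of_lt (by omega)]
  exact congrArg αf (Fin.ext (by simp [Nat.mod_eq_of_lt (by omega : 1 < l + 1)]))

theorem pathRoot_one (hl : 2 ≤ l) : pathRoot αf 1 = αf 2 := by
  rw [pathRoot_of_lt (by omega)]
  exact congrArg αf (Fin.ext (by simp [Nat.mod_eq_of_lt (by omega : 2 < l + 1)]))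

theorem pathRoot_mem_range (i : ℕ) : pathRoot αf i ∈ Set.range αf := by
  unfold pathRoot
  split <;> exact Set.mem_range_self _

variable [AddCommMonoid V]

theorem pathSum_zero : pathSum αf 0 = pathRoot αf 0 := Finset.sum_range_one _

theorem pathSum_succ (j : ℕ) : pathSum αf (j + 1) = pathSum αf j + pathRoot αf (j + 1) :=
  Finset.sum_range_succ _ _

theorem pathSum_self : pathSum αf l = ∑ i, αf i := by
  rw [Fin.sum_univ_succ, add_comm, pathSum, Finset.sum_range_succ, pathRoot_self,
    ← Fin.sum_univ_eq_sum_range]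
  congr 1
  exact Finset.sum_congr rfl fun i _ => pathRoot_of_lt i.isLt

end Path

namespace IsTypeDTwo

variable {V : Type*} [AddCommGroup V] [Module ℝ V] {B : LinearMap.BilinForm ℝ V} {R P : Set V}
  {l n : ℕ} {a δ : V} {k : V → ℕ} {g : V → Bool} {αf : Fin (l + 1) → V} {i j : ℕ}

theorem apply_zero_zero (hD : IsTypeDTwo B P l αf) : B (αf 0) (αf 0) = 1 := hD.2.2.1

theorem apply_one_one (hD : IsTypeDTwo B P l αf) : B (αf 1) (αf 1) = 1 := hD.2.2.2.1

theorem apply_one_two (hD : IsTypeDTwo B P l αf) : B (αf 1) (αf 2) = -1 := hD.2.2.2.2.2.1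

theorem mem (hD : IsTypeDTwo B P l αf) (i : Fin (l + 1)) : αf i ∈ P :=
  hD.2.1 ▸ Set.mem_range_self i

theorem pathRoot_mem (hD : IsTypeDTwo B P l αf) (i : ℕ) : pathRoot αf i ∈ P :=
  hD.2.1 ▸ pathRoot_mem_range i

theorem apply_pathRoot_self (hD : IsTypeDTwo B P l αf) (hi₀ : 0 < i) (hi : i < l) :
    B (pathRoot αf i) (pathRoot αf i) = 2 := by
  rw [pathRoot_of_lt hi]
  exact hD.2.2.2.2.1 _ (by simp only; omega)

theorem apply_pathRoot_succ (hD : IsTypeDTwo B P l αf) (hl : 2 ≤ l) (hi : i < l) :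
    B (pathRoot αf i) (pathRoot αf (i + 1)) = -1 := by
  obtain rfl | hi₀ := Nat.eq_zero_or_pos i
  · rw [pathRoot_zero (by omega), pathRoot_one hl, hD.apply_one_two]
  obtain hlt | rfl := Nat.lt_or_eq_of_le (Nat.succ_le_of_lt hi)
  · rw [pathRoot_of_lt hi, pathRoot_of_lt hlt]
    exact hD.2.2.2.2.2.2.1 (i + 1) (by omega) (by omega)
  · rw [pathRoot_of_lt hi, pathRoot_self]
    exact hD.2.2.2.2.2.2.2.1

theorem apply_pathRoot_of_add_two_le (hD : IsTypeDTwo B P l αf) (hij : i + 2 ≤ j)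
    (hj : j ≤ l) : B (pathRoot αf i) (pathRoot αf j) = 0 := by
  have key (u v : Fin (l + 1)) (hu : 1 ≤ (u : ℕ))
      (huv : (u : ℕ) + 2 ≤ v ∨ ((v : ℕ) = 0 ∧ (u : ℕ) < l)) : B (αf u) (αf v) = 0 := by
    refine hD.2.2.2.2.2.2.2.2 u v (fun h => by subst h; omega) ?_
    rintro (h | ⟨m, hm, -, h⟩ | h) <;> rw [Finset.pair_eq_pair_iff] at h <;> omega
  rw [pathRoot_of_lt (by omega)]
  obtain hj | rfl := Nat.lt_or_eq_of_le hj
  · rw [pathRoot_of_lt hj]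
    exact key _ _ (by simp) (by simp only; omega)
  · rw [pathRoot_self]
    exact key _ _ (by simp) (by simp only [Fin.coe_ofNat_eq_mod, Nat.zero_mod, true_and]; omega)

theorem apply_pathSum_pathRoot_succ (hD : IsTypeDTwo B P l αf) (hl : 2 ≤ l) (hj : j < l) :
    B (pathSum αf j) (pathRoot αf (j + 1)) = -1 := by
  rw [pathSum, Finset.sum_range_succ, map_add, LinearMap.add_apply, map_sum,
    LinearMap.sum_apply, Finset.sum_eq_zero, hD.apply_pathRoot_succ hl hj, zero_add]
  intro i hi
  exact hD.apply_pathRoot_of_add_two_le (by rw [Finset.mem_range] at hi; omega) (by omega)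

theorem apply_pathSum_self_of_lt (hD : IsTypeDTwo B P l αf) (hB : ∀ u v, B u v = B v u)
    (hl : 2 ≤ l) (hj : j < l) : B (pathSum αf j) (pathSum αf j) = 1 := by
  induction j with
  | zero => rw [pathSum_zero, pathRoot_zero (by omega), hD.apply_one_one]
  | succ j ih =>
    simp only [pathSum_succ, map_add, LinearMap.add_apply]
    rw [ih (by omega), hB (pathRoot αf _), hD.apply_pathSum_pathRoot_succ hl (by omega),
      hD.apply_pathRoot_self (by omega) hj]
    norm_num

theorem apply_pathSum_last (hD : IsTypeDTwo B P l αf) (hB : ∀ u v, B u v = B v u)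
    (hl : 2 ≤ l) : B (pathSum αf l) (pathSum αf l) = 0 := by
  obtain ⟨j, rfl⟩ : ∃ j, l = j + 1 := ⟨l - 1, by omega⟩
  simp only [pathSum_succ, map_add, LinearMap.add_apply]
  rw [hD.apply_pathSum_self_of_lt hB hl (by omega), hB (pathRoot αf _),
    hD.apply_pathSum_pathRoot_succ hl (by omega), pathRoot_self, hD.apply_zero_zero]
  norm_num

theorem delta_eq (hD : IsTypeDTwo B P l αf)
    (hB : ∀ u v, B u v = B v u) (hl : 2 ≤ l) (hfs : IsFundamentalSet B R l P a)
    (hδ : IsDelta B P δ) : δ = pathSum αf l := by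
  have hsum := hD.apply_pathSum_last hB hl
  rw [pathSum_self] at hsum ⊢
  exact hδ.eq_sum_of_isotropic hfs hD.1 hD.2.1 hsum

theorem apply_one_zero (hD : IsTypeDTwo B P l αf) (hl : 2 ≤ l) : B (αf 1) (αf 0) = 0 := by
  rw [← pathRoot_zero (αf := αf) (by omega), ← pathRoot_self (αf := αf)]
  exact hD.apply_pathRoot_of_add_two_le hl le_rfl

theorem add_zsmul_pathSum_mem_iff {l' : ℕ} (hD : IsTypeDTwo B P l αf) (hE : IsEARS B R l' n)
    (hPR : P ⊆ R) (hl : 2 ≤ l) {x : V} (c : ℤ) {i j : ℕ} (hij : i ≤ j) (hj : j < l)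
    (hx : ∀ m, i ≤ m → m < j → B (pathRoot αf (m + 1)) x = 0) :
    x + c • pathSum αf j ∈ R ↔ x + c • pathSum αf i ∈ R := by
  induction j, hij using Nat.le_induction with
  | base => rfl
  | succ j hij ih =>
    have hsum : B (pathRoot αf (j + 1)) (pathSum αf j) = -1 := by
      rw [hE.symm, hD.apply_pathSum_pathRoot_succ hl (by omega)]
    have ht : 2 * B (pathRoot αf (j + 1)) (x + c • pathSum αf j)
        = (-c : ℤ) * B (pathRoot αf (j + 1)) (pathRoot αf (j + 1)) := by
      rw [map_add, map_zsmul, hx j hij (by omega), hsum, hD.apply_pathRoot_self (by omega) hj]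
      push_cast
      ring
    rw [← ih (by omega) fun m hm hmj => hx m hm (by omega),
      ← hE.sub_zsmul_mem_iff (hPR (hD.pathRoot_mem _)) ht, pathSum_succ]
    congr! 1
    module

theorem zsmul_alpha_zero_add_mem_iff (hD : IsTypeDTwo B P l αf) (hE : IsEARS B R l n)
    (hfs : IsFundamentalSet B R l P a) (hδ : IsDelta B P δ) (hl : 2 ≤ l) {ρ : V}
    (hρ : B ρ = 0) (c : ℤ) : c • αf 0 + ρ ∈ R ↔ c • (δ - αf 1) + ρ ∈ R := by
  have hδ₀ := hE.eq_zero_of_isotropic hδ.isotropic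
  have hδl := hD.delta_eq hE.symm hl hfs hδ
  obtain ⟨j, rfl⟩ : ∃ j, l = j + 1 := ⟨l - 1, by omega⟩
  have key := hD.add_zsmul_pathSum_mem_iff hE hfs.subset hl (x := c • δ + ρ) (-c)
    (Nat.zero_le j) (by omega) fun m _ _ => by
      simp [hE.apply_eq_zero_of_eq_zero hδ₀, hE.apply_eq_zero_of_eq_zero hρ]
  rw [pathSum_succ, pathRoot_self] at hδl
  rw [pathSum_zero, pathRoot_zero (by omega)] at key
  convert key using 2 <;> rw [hδl] <;> module

theorem alpha_two_add_mem_iff_delta_sub_add_mem (hD : IsTypeDTwo B P l αf) (hE : IsEARS B R l n)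
    (hfs : IsFundamentalSet B R l P a) (hδ : IsDelta B P δ) (hl : 2 ≤ l) {σ : V}
    (hσ : B σ = 0) : αf 2 + σ ∈ R ↔ δ - αf 0 - αf 1 + σ ∈ R := by
  have hδl := hD.delta_eq hE.symm hl hfs hδ
  obtain ⟨j, rfl⟩ : ∃ j, l = j + 1 := ⟨l - 1, by omega⟩
  have key := hD.add_zsmul_pathSum_mem_iff hE hfs.subset hl (x := σ - αf 1) 1
    (by omega : 1 ≤ j) (by omega) fun m hm _ => by
      rw [map_sub, hE.apply_eq_zero_of_eq_zero hσ, ← pathRoot_zero (αf := αf) (by omega), hE.symm,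
        hD.apply_pathRoot_of_add_two_le (by omega) (by omega), sub_zero]
  rw [pathSum_succ, pathRoot_self] at hδl
  rw [pathSum_succ, pathSum_zero, pathRoot_zero (by omega), pathRoot_one hl] at key
  convert key.symm using 2 <;> [module; (rw [hδl]; module)]

theorem add_mul_zsmul_delta_mem_iff (hD : IsTypeDTwo B P l αf) (hE : IsEARS B R l n)
    (hfs : IsFundamentalSet B R l P a) (hδ : IsDelta B P δ) (hl : 2 ≤ l) {x : V} {p : ℤ}
    (hp : 2 * B (αf 1) x = p) (t : ℤ) : x + (p * t) • δ ∈ R ↔ x ∈ R := by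
  have hδ₀ := hE.eq_zero_of_isotropic hδ.isotropic
  have hα₀ : (-1 : ℤ) • αf 0 + 0 ∈ R := by
    simpa using hE.neg_mem (hfs.subset (hD.mem 0))
  have hα₁δ : αf 1 + -δ ∈ R := by
    convert (hD.zsmul_alpha_zero_add_mem_iff hE hfs hδ hl (map_zero B) (-1)).mp hα₀ using 1
    module
  have h := hE.add_mul_zsmul_mem_iff (hfs.subset (hD.mem 1)) hα₁δ (ν := -δ)
    (by rw [map_neg, hδ₀, neg_zero]) (by rw [hp, hD.apply_one_one, mul_one]) (-t)
  rwa [mul_neg, neg_smul_neg] at h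

theorem zsmul_add_mem (hD : IsTypeDTwo B P l αf) (hkg : IsKG R a P k g)
    (hk1 : ∀ α ∈ P, k α = 1) (i : Fin (l + 1)) {ε : ℤ} (hε : ε = 1 ∨ ε = -1) (r : ℤ) :
    ε • αf i + r • a ∈ R := by
  simpa [hk1 _ (hD.mem i)] using hkg.zsmul_add_mem (hD.mem i) hε r

theorem alpha_one_add_mem (hD : IsTypeDTwo B P l αf) (hE : IsEARS B R l n)
    (hfs : IsFundamentalSet B R l P a) (hδ : IsDelta B P δ) (hkg : IsKG R a P k g)
    (hk1 : ∀ α ∈ P, k α = 1) (hl : 2 ≤ l) (m r : ℤ) : αf 1 + (m • δ + r • a) ∈ R := by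
  have hδ₀ := hE.eq_zero_of_isotropic hδ.isotropic
  have ha₀ := hE.eq_zero_of_isotropic hfs.isotropic
  have hp (c : ℤ) : 2 * B (αf 1) (αf 1 + (c • δ + r • a)) = (2 : ℤ) := by
    simp [hE.apply_eq_zero_of_eq_zero hδ₀, hE.apply_eq_zero_of_eq_zero ha₀, hD.apply_one_one]
  obtain ⟨t, rfl | rfl⟩ := m.even_or_odd'
  · have h := (hD.add_mul_zsmul_delta_mem_iff hE hfs hδ hl (hp 0) t).mpr
      (by simpa using hD.zsmul_add_mem hkg hk1 1 (Or.inl rfl) r)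
    convert h using 1
    module
  · have h₀ : αf 1 + ((-1 : ℤ) • δ + r • a) ∈ R := by
      convert (hD.zsmul_alpha_zero_add_mem_iff hE hfs hδ hl (ρ := r • a) (by simp [ha₀]) (-1)).mp
        (hD.zsmul_add_mem hkg hk1 0 (Or.inr rfl) r) using 1
      module
    convert (hD.add_mul_zsmul_delta_mem_iff hE hfs hδ hl (hp (-1)) (t + 1)).mpr h₀ using 1
    module

theorem alpha_two_add_mem (hD : IsTypeDTwo B P l αf) (hE : IsEARS B R l n)
    (hfs : IsFundamentalSet B R l P a) (hδ : IsDelta B P δ) (hkg : IsKG R a P k g)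
    (hk1 : ∀ α ∈ P, k α = 1) (hl : 2 ≤ l) {m : ℤ} (hm : Even m) (r : ℤ) :
    αf 2 + (m • δ + r • a) ∈ R := by
  have ha₀ := hE.eq_zero_of_isotropic hfs.isotropic
  have hp : 2 * B (αf 1) (αf 2 + r • a) = (-2 : ℤ) := by
    simp [hE.apply_eq_zero_of_eq_zero ha₀, hD.apply_one_two]
  obtain ⟨t, rfl⟩ := hm
  convert (hD.add_mul_zsmul_delta_mem_iff hE hfs hδ hl hp (-t)).mpr
    (by simpa using hD.zsmul_add_mem hkg hk1 2 (Or.inl rfl) r) using 1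
  module

theorem two_alpha_one_add_mem (hD : IsTypeDTwo B P l αf) (hE : IsEARS B R l n)
    (hfs : IsFundamentalSet B R l P a) (hδ : IsDelta B P δ) (hkg : IsKG R a P k g)
    (hk1 : ∀ α ∈ P, k α = 1) (hg0 : g (αf 0) = true) (hl : 2 ≤ l) (q : ℤ) {r : ℤ}
    (hr : Odd r) : (2 : ℤ) • αf 1 + ((4 * q + 2) • δ + r • a) ∈ R := by
  have hδ₀ := hE.eq_zero_of_isotropic hδ.isotropic
  have ha₀ := hE.eq_zero_of_isotropic hfs.isotropic
  have h₀ : (-2 : ℤ) • αf 0 + r • a ∈ R := by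
    simpa [hk1 _ (hD.mem 0)] using hkg.two_mul_zsmul_add_mem (hD.mem 0) hg0 (Or.inr rfl) hr
  have h₁ := (hD.zsmul_alpha_zero_add_mem_iff hE hfs hδ hl (ρ := r • a) (by simp [ha₀]) (-2)).mp h₀
  have hp : 2 * B (αf 1) ((-2 : ℤ) • (δ - αf 1) + r • a) = (4 : ℤ) := by
    norm_num [hE.apply_eq_zero_of_eq_zero hδ₀, hE.apply_eq_zero_of_eq_zero ha₀, hD.apply_one_one]
  convert (hD.add_mul_zsmul_delta_mem_iff hE hfs hδ hl hp (q + 1)).mpr h₁ using 1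
  module

theorem zsmul_alpha_one_add_not_mem {c r : ℤ} (hD : IsTypeDTwo B P l αf)
    (hE : IsEARS B R l n) (hfs : IsFundamentalSet B R l P a) (hkg : IsKG R a P k g)
    (hg1 : g (αf 1) = false) (hc : c = 2 ∨ c = -2) : c • αf 1 + r • a ∉ R := fun h => by
  have := hkg.eq_one_or_eq_neg_one (hD.mem 1) hg1 (by rw [hD.apply_one_one]; norm_num)
    (hE.eq_zero_of_isotropic hfs.isotropic) h
  omega

theorem alpha_two_add_mem_iff (hD : IsTypeDTwo B P l αf) (hE : IsEARS B R l n)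
    (hfs : IsFundamentalSet B R l P a) (hδ : IsDelta B P δ) (hkg : IsKG R a P k g)
    (hk1 : ∀ α ∈ P, k α = 1) (hg0 : g (αf 0) = true) (hg1 : g (αf 1) = false) (hl : 2 ≤ l)
    (m r : ℤ) : αf 2 + (m • δ + r • a) ∈ R ↔ Even m := by
  refine ⟨fun h => ?_, fun hm => hD.alpha_two_add_mem hE hfs hδ hkg hk1 hl hm r⟩
  by_contra hm
  obtain ⟨q, rfl⟩ := Int.not_even_iff_odd.mp hm
  have hδ₀ := hE.eq_zero_of_isotropic hδ.isotropic
  have ha₀ := hE.eq_zero_of_isotropic hfs.isotropic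
  have hσ : B ((2 * q + 1) • δ + r • a) = 0 := by simp [hδ₀, ha₀]
  have hw := (hD.alpha_two_add_mem_iff_delta_sub_add_mem hE hfs hδ hl hσ).mp h
  have hu : (2 : ℤ) • αf 0 + (1 : ℤ) • a ∈ R := by
    simpa [hk1 _ (hD.mem 0)] using hkg.two_mul_zsmul_add_mem (hD.mem 0) hg0 (Or.inl rfl) odd_one
  -- the reflection in the long root `δ - α₀ - α₁ + σ` sends `2α₀ + a` into `-2α₁ + (2r+1)a + 4ℤδ`
  have hv := hE.sub_zsmul_mem hw hu (t := -2) (by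
    norm_num [hδ₀, hE.apply_eq_zero_of_eq_zero hδ₀, hE.apply_eq_zero_of_eq_zero ha₀, hσ,
      hE.apply_eq_zero_of_eq_zero hσ, hD.apply_zero_zero, hD.apply_one_one,
      hD.apply_one_zero hl, hE.symm (αf 0) (αf 1)])
  have hp : 2 * B (αf 1) ((-2 : ℤ) • αf 1 + (2 * r + 1) • a) = (-4 : ℤ) := by
    norm_num [hE.apply_eq_zero_of_eq_zero ha₀, hD.apply_one_one]
  refine hD.zsmul_alpha_one_add_not_mem hE hfs hkg hg1 (Or.inr rfl)
    ((hD.add_mul_zsmul_delta_mem_iff hE hfs hδ hl hp (-(q + 1))).mp ?_)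
  convert hv using 1
  module

theorem alpha_two_add_mem_of_two_alpha_one_add_mem (hD : IsTypeDTwo B P l αf)
    (hE : IsEARS B R l n) (hfs : IsFundamentalSet B R l P a) {σ : V} (hσ : B σ = 0)
    (h : (2 : ℤ) • αf 1 + σ ∈ R) : αf 2 + σ ∈ R := by
  have hσ' := hE.apply_eq_zero_of_eq_zero hσ
  have h₁ := hE.sub_zsmul_mem h (hfs.subset (hD.mem 2)) (t := -1) (by
    simp [hσ, hσ', hD.apply_one_one, hD.apply_one_two])
  have h₂ := hE.sub_zsmul_mem (hfs.subset (hD.mem 1)) h₁ (t := 2) (by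
    norm_num [hσ', hD.apply_one_one, hD.apply_one_two])
  convert h₂ using 1
  module

theorem two_alpha_one_add_mem_iff (hD : IsTypeDTwo B P l αf) (hE : IsEARS B R l n)
    (hred : IsReducedRS R) (hfs : IsFundamentalSet B R l P a) (hδ : IsDelta B P δ)
    (hkg : IsKG R a P k g) (hk1 : ∀ α ∈ P, k α = 1) (hg0 : g (αf 0) = true)
    (hg1 : g (αf 1) = false) (hl : 2 ≤ l) (m r : ℤ) :
    (2 : ℤ) • αf 1 + (m • δ + r • a) ∈ R ↔ m % 4 = 2 ∧ Odd r := by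
  refine ⟨fun h => ?_, fun ⟨hm, hr⟩ => ?_⟩
  · have hσ : B (m • δ + r • a) = 0 := by
      simp [hE.eq_zero_of_isotropic hδ.isotropic, hE.eq_zero_of_isotropic hfs.isotropic]
    obtain ⟨m, rfl⟩ := (hD.alpha_two_add_mem_iff hE hfs hδ hkg hk1 hg0 hg1 hl _ r).mp
      (hD.alpha_two_add_mem_of_two_alpha_one_add_mem hE hfs hσ h)
    refine ⟨by_contra fun hm => ?_, by_contra fun hr => ?_⟩
    · obtain ⟨q, rfl⟩ : ∃ q, m = 2 * q := ⟨m / 2, by omega⟩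
      have hp : 2 * B (αf 1) ((2 : ℤ) • αf 1 + r • a) = (4 : ℤ) := by
        norm_num [hE.apply_eq_zero_of_eq_zero (hE.eq_zero_of_isotropic hfs.isotropic),
          hD.apply_one_one]
      refine hD.zsmul_alpha_one_add_not_mem hE hfs hkg hg1 (Or.inl rfl)
        ((hD.add_mul_zsmul_delta_mem_iff hE hfs hδ hl hp q).mp ?_)
      convert h using 1
      module
    · obtain ⟨s, rfl⟩ := Int.not_odd_iff_even.mp hr
      refine hred _ (hD.alpha_one_add_mem hE hfs hδ hkg hk1 hl m s) ?_
      convert h using 1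
      module
  · obtain ⟨q, rfl⟩ : ∃ q, m = 4 * q + 2 := ⟨m / 4, by omega⟩
    exact hD.two_alpha_one_add_mem hE hfs hδ hkg hk1 hg0 hl q hr

end IsTypeDTwo

section Lattices

variable {V : Type*} [AddCommGroup V] {R : Set V} {x δ a : V}

theorem setOf_add_mem_eq {p : ℤ → ℤ → Prop} (h : ∀ m r : ℤ, x + (m • δ + r • a) ∈ R ↔ p m r) :
    {σ : V | (∃ m r : ℤ, σ = m • δ + r • a) ∧ x + σ ∈ R}
      = {σ | ∃ m r : ℤ, σ = m • δ + r • a ∧ p m r} := by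
  ext σ
  constructor
  · rintro ⟨⟨m, r, rfl⟩, hσ⟩
    exact ⟨m, r, rfl, (h m r).mp hσ⟩
  · rintro ⟨m, r, rfl, hp⟩
    exact ⟨⟨m, r, rfl⟩, (h m r).mpr hp⟩

theorem setOf_even_eq :
    {σ : V | ∃ m r : ℤ, σ = m • δ + r • a ∧ Even m}
      = {v | ∃ m r : ℤ, v = (2 * m) • δ + (2 * r) • a ∨ v = (2 * m) • δ + (2 * r + 1) • a} := by
  ext σ
  constructor
  · rintro ⟨m, r, rfl, q, rfl⟩
    obtain ⟨s, rfl | rfl⟩ := r.even_or_odd'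
    exacts [⟨q, s, .inl (by rw [← two_mul])⟩, ⟨q, s, .inr (by rw [← two_mul])⟩]
  · rintro ⟨m, r, rfl | rfl⟩
    exacts [⟨_, _, rfl, even_two_mul m⟩, ⟨_, _, rfl, even_two_mul m⟩]

theorem setOf_mod_four_eq :
    {σ : V | ∃ m r : ℤ, σ = m • δ + r • a ∧ (m % 4 = 2 ∧ Odd r)}
      = {v | ∃ m r : ℤ,
          v = (4 * m + 2) • δ + (4 * r + 1) • a ∨ v = (4 * m + 2) • δ + (4 * r + 3) • a} := by
  ext σ
  constructor
  · rintro ⟨m, r, rfl, hm, hr⟩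
    rw [Int.odd_iff] at hr
    obtain ⟨s, rfl | rfl⟩ : ∃ s, r = 4 * s + 1 ∨ r = 4 * s + 3 := ⟨r / 4, by omega⟩
    exacts [⟨m / 4, s, .inl (by rw [← show m = 4 * (m / 4) + 2 by omega])⟩,
      ⟨m / 4, s, .inr (by rw [← show m = 4 * (m / 4) + 2 by omega])⟩]
  · rintro ⟨m, r, rfl | rfl⟩
    exacts [⟨_, _, rfl, by omega, ⟨2 * r, by ring⟩⟩, ⟨_, _, rfl, by omega, ⟨2 * r + 1, by ring⟩⟩]

end Lattices

/-- For the elliptic root system of type `D_{l+1}^{(2)}` with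
`k ≡ 1`, `g(α₀) = 2ℤ+1` and `g(α) = ∅` otherwise:
`L_sh = M`, `L_lg = 2M ∪ (a + 2M)` and `L_ex = (2δ + a + 4M) ∪ (2δ + 3a + 4M)`,
where `M = ℤδ ⊕ ℤa` and `α₁ + L_sh = R ∩ (α₁ + M)`, `α₂ + L_lg = R ∩ (α₂ + M)`,
`2α₁ + L_ex = R ∩ (2α₁ + M)`. -/
theorem stmt17 {V : Type*} [AddCommGroup V] [Module ℝ V]
    (B : LinearMap.BilinForm ℝ V) (R : Set V) (l : ℕ) (hl : 2 ≤ l)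
    (hE : IsEARS B R l 2) (hred : IsReducedRS R)
    (P : Set V) (a : V) (hfs : IsFundamentalSet B R l P a)
    (k : V → ℕ) (g : V → Bool) (hkg : IsKG R a P k g)
    (αf : Fin (l + 1) → V) (hD : IsTypeDTwo B P l αf)
    (hk1 : ∀ α ∈ P, k α = 1)
    (hg0 : g (αf 0) = true) (hgi : ∀ i : Fin (l + 1), i ≠ 0 → g (αf i) = false)
    (δ : V) (hδ : IsDelta B P δ) :
    -- `L_sh = M`
    {σ : V | (∃ m r : ℤ, σ = m • δ + r • a) ∧ αf 1 + σ ∈ R}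
        = {v : V | ∃ m r : ℤ, v = m • δ + r • a} ∧
    -- `L_lg = 2M ∪ (a + 2M)`
    {σ : V | (∃ m r : ℤ, σ = m • δ + r • a) ∧ αf 2 + σ ∈ R}
        = {v : V | ∃ m r : ℤ,
            v = (2 * m) • δ + (2 * r) • a ∨ v = (2 * m) • δ + (2 * r + 1) • a} ∧
    -- `L_ex = (2δ + a + 4M) ∪ (2δ + 3a + 4M)`
    {σ : V | (∃ m r : ℤ, σ = m • δ + r • a) ∧ (2 : ℤ) • αf 1 + σ ∈ R}
        = {v : V | ∃ m r : ℤ,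
            v = (4 * m + 2) • δ + (4 * r + 1) • a ∨
            v = (4 * m + 2) • δ + (4 * r + 3) • a} := by
  have hg1 : g (αf 1) = false :=
    hgi 1 (by simp [Fin.ext_iff, Nat.mod_eq_of_lt (by omega : 1 < l + 1)])
  refine ⟨?_, ?_, ?_⟩
  · rw [setOf_add_mem_eq fun m r =>
      iff_true_intro (hD.alpha_one_add_mem hE hfs hδ hkg hk1 hl m r)]
    simp
  · rw [setOf_add_mem_eq (hD.alpha_two_add_mem_iff hE hfs hδ hkg hk1 hg0 hg1 hl), setOf_even_eq]
  · rw [setOf_add_mem_eq (hD.two_alpha_one_add_mem_iff hE hred hfs hδ hkg hk1 hg0 hg1 hl),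
      setOf_mod_four_eq]
end
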